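/- arXiv:2103.11680 — 7 statements merged into one kernel-verified Lean document; each statement's English description precedes it below -/
import Mathlib

section
/- For k ≥ 3, the k×k real symmetric matrix M with entries M_{ab} = (2/k)·cos(π(a−b)/k) for a,b ∈ {0,…,k−1} satisfies M² = M, i.e., M is a projection matrix. -/
open Real Finset

/-!
By the product-to-sum formula, `(M * M) a b` is `2 / k²` times
`∑ c, (cos (π (a - b) / k) + cos (2π c / k - π (a + b) / k))`. The second terms are the real
parts of a rotated sum of all `k`-th roots of unity, hence cancel for `k ≥ 2`; the first terms add
up to `k cos (π (a - b) / k)`.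
-/

theorem sum_range_cos_add_two_pi_mul_div {k : ℕ} (hk : 1 < k) (θ : ℝ) :
    ∑ c ∈ range k, cos (θ + 2 * π * c / k) = 0 := by
  have hroots := (Complex.isPrimitiveRoot_exp k (by omega)).geom_sum_eq_zero hk
  have hterm (c : ℕ) : cos (θ + 2 * π * c / k)
      = (Complex.exp (θ * Complex.I) * Complex.exp (2 * π * Complex.I / k) ^ c).re := by
    rw [← Complex.exp_nat_mul, ← Complex.exp_add, ← Complex.exp_ofReal_mul_I_re]
    push_cast
    ring_nf
  simp only [hterm, ← Complex.re_sum, ← mul_sum, hroots, mul_zero, Complex.zero_re]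

theorem cos_mul_cos_eq_half_add (x y : ℝ) :
    cos x * cos y = (cos (x + y) + cos (y - x)) / 2 := by
  rw [cos_add, cos_sub]
  ring

/-- For `k ≥ 3`, the `k × k` real matrix `M` with entries
`M a b = (2/k) * cos (π (a - b) / k)` is a projection: `M * M = M`. -/
theorem chained_matrix_is_projection (k : ℕ) (hk : 3 ≤ k)
    (M : Matrix (Fin k) (Fin k) ℝ)
    (hM : ∀ a b : Fin k, M a b = (2 / (k : ℝ)) * Real.cos (π * ((a : ℝ) - (b : ℝ)) / k)) :
    M * M = M := by
  have hk0 : (k : ℝ) ≠ 0 := by positivity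
  ext a b
  have hentry (c : Fin k) : M a c * M c b = 2 / (k : ℝ) ^ 2 *
      (cos (π * ((a : ℝ) - b) / k) + cos (-(π * ((a : ℝ) + b) / k) + 2 * π * (c : ℕ) / k)) := by
    have hsum : π * ((a : ℝ) - c) / k + π * ((c : ℝ) - b) / k = π * ((a : ℝ) - b) / k := by ring
    have hdiff : π * ((c : ℝ) - b) / k - π * ((a : ℝ) - c) / k
        = -(π * ((a : ℝ) + b) / k) + 2 * π * (c : ℕ) / k := by ring
    rw [hM, hM, mul_mul_mul_comm, cos_mul_cos_eq_half_add, hsum, hdiff]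
    ring
  have hcancel := sum_range_cos_add_two_pi_mul_div (by omega : 1 < k) (-(π * ((a : ℝ) + b) / k))
  rw [← Fin.sum_univ_eq_sum_range (fun c => cos (-(π * ((a : ℝ) + b) / k) + 2 * π * c / k))]
    at hcancel
  rw [Matrix.mul_apply, hM]
  simp only [hentry, ← mul_sum, sum_add_distrib, hcancel, sum_const, card_univ, Fintype.card_fin,
    nsmul_eq_mul, add_zero]
  field_simp
end

section
/- For any integer k ≥ 3, the maximum over all sign vectors σ ∈ {−1,+1}^k of |∑_{a=0}^{k−1} σ_a e^{iaπ/k}|² equals 1/sin²(π/(2k)), and the maximum is achieved by σ_a = +1 for all a. -/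
open Real

/-!
Rotating `S = ∑ σ_a e^{iaπ/k}` onto the positive real axis gives
`‖S‖ = ∑ σ_a cos(ψ + aπ/k) ≤ ∑ |cos(ψ + aπ/k)|` for some phase `ψ`. With `h = π/(2k)`, each term
satisfies `2 |cos c| sin h ≤ |sin (c + h) - sin (c - h)| ≤ ∫_{c-h}^{c+h} |cos|`, and these
intervals tile one period of `|cos|`, over which the integral is `2`; hence `‖S‖ ≤ 1/sin h`.
For the all-ones vector the sum is geometric with ratio `z = e^{iπ/k}` and `z^k = -1`, so
`‖S‖ = 2/‖z - 1‖ = 1/sin h`.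
-/

lemma sin_pi_div_two_mul_pos {k : ℕ} (hk : k ≠ 0) : 0 < sin (π / (2 * k)) := by
  have hk1 : (1 : ℝ) ≤ k := by exact_mod_cast Nat.one_le_iff_ne_zero.mpr hk
  exact sin_pos_of_pos_of_lt_pi (by positivity) (div_lt_self pi_pos (by linarith))

lemma integral_abs_cos_eq_two (t : ℝ) : ∫ x in t..t + π, |cos x| = 2 := by
  have hper : Function.Periodic (fun x => |cos x|) π := fun x => by simp [cos_add_pi]
  rw [hper.intervalIntegral_add_eq t (-(π / 2)), show -(π / 2) + π = π / 2 by ring,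
    intervalIntegral.integral_congr (g := cos), integral_cos]
  · norm_num
  · intro x hx
    rw [Set.uIcc_of_le (by linarith [pi_pos])] at hx
    exact abs_of_nonneg (cos_nonneg_of_mem_Icc hx)

lemma two_mul_abs_cos_mul_abs_sin_le_integral (c : ℝ) {h : ℝ} (hh : 0 ≤ h) :
    2 * |cos c| * |sin h| ≤ ∫ x in c - h..c + h, |cos x| :=
  calc 2 * |cos c| * |sin h| = |sin (c + h) - sin (c - h)| := by
        rw [sin_add, sin_sub, show sin c * cos h + cos c * sin h - (sin c * cos h - cos c * sin h)
          = 2 * cos c * sin h by ring, abs_mul, abs_mul, abs_two]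
    _ = |∫ x in c - h..c + h, cos x| := by rw [integral_cos]
    _ ≤ ∫ x in c - h..c + h, |cos x| := intervalIntegral.abs_integral_le_integral_abs (by linarith)

lemma sum_abs_cos_le {k : ℕ} (hk : k ≠ 0) (t : ℝ) :
    ∑ a ∈ Finset.range k, |cos (t + a * π / k)| ≤ 1 / sin (π / (2 * k)) := by
  set h := π / (2 * k)
  have hs : 0 < sin h := sin_pi_div_two_mul_pos hk
  have hkR : (k : ℝ) ≠ 0 := by exact_mod_cast hk
  let u : ℕ → ℝ := fun a => t + a * π / k - h
  have hu : ∀ a : ℕ, u (a + 1) = t + a * π / k + h := fun a => by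
    simp only [u, h]; push_cast; field_simp; ring
  have huk : u k = u 0 + π := by simp only [u]; field_simp; ring
  rw [le_div_iff₀ hs]
  calc (∑ a ∈ Finset.range k, |cos (t + a * π / k)|) * sin h
      = (∑ a ∈ Finset.range k, 2 * |cos (t + a * π / k)| * |sin h|) / 2 := by
        rw [abs_of_pos hs, Finset.sum_mul, Finset.sum_div]
        exact Finset.sum_congr rfl fun a _ => by ring
    _ ≤ (∑ a ∈ Finset.range k, ∫ x in u a..u (a + 1), |cos x|) / 2 := by
        gcongr with a
        rw [hu]
        exact two_mul_abs_cos_mul_abs_sin_le_integral _ (by positivity)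
    _ = (∫ x in u 0..u 0 + π, |cos x|) / 2 := by
        rw [intervalIntegral.sum_integral_adjacent_intervals fun _ _ =>
          continuous_cos.abs.intervalIntegrable _ _, huk]
    _ = 1 := by rw [integral_abs_cos_eq_two]; norm_num

lemma exists_norm_sum_le_sum_abs_cos {ι : Type*} (s : Finset ι) (σ θ : ι → ℝ)
    (hσ : ∀ a ∈ s, |σ a| ≤ 1) :
    ∃ ψ : ℝ, ‖∑ a ∈ s, (σ a : ℂ) * Complex.exp (θ a * Complex.I)‖ ≤ ∑ a ∈ s, |cos (ψ + θ a)| := by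
  set S := ∑ a ∈ s, (σ a : ℂ) * Complex.exp (θ a * Complex.I)
  refine ⟨-S.arg, ?_⟩
  have hrot : ‖S‖ = (Complex.exp (↑(-S.arg) * Complex.I) * S).re := by
    conv_rhs => rw [← Complex.norm_mul_exp_arg_mul_I S]
    rw [mul_left_comm, ← Complex.exp_add]
    simp
  rw [hrot, Finset.mul_sum, Complex.re_sum]
  refine Finset.sum_le_sum fun a ha => ?_
  rw [mul_left_comm, ← Complex.exp_add, ← add_mul, ← Complex.ofReal_add, Complex.re_ofReal_mul,
    Complex.exp_ofReal_mul_I_re]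
  calc σ a * cos (-S.arg + θ a) ≤ |σ a| * |cos (-S.arg + θ a)| := by
        rw [← abs_mul]; exact le_abs_self _
    _ ≤ |cos (-S.arg + θ a)| := mul_le_of_le_one_left (abs_nonneg _) (hσ a ha)

lemma exp_I_mul_mul_pi_div (x : ℝ) (k : ℕ) :
    Complex.exp (Complex.I * x * π / k) = Complex.exp (↑(x * π / k) * Complex.I) := by
  push_cast; ring_nf

lemma norm_sum_mul_exp_I_mul_pi_div_le {k : ℕ} (hk : k ≠ 0) (σ : Fin k → ℝ)
    (hσ : ∀ a, |σ a| ≤ 1) :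
    ‖∑ a : Fin k, (σ a : ℂ) * Complex.exp (Complex.I * (a : ℝ) * π / k)‖
      ≤ 1 / sin (π / (2 * k)) := by
  simp_rw [exp_I_mul_mul_pi_div]
  obtain ⟨ψ, hψ⟩ := exists_norm_sum_le_sum_abs_cos Finset.univ σ (fun a => (a : ℕ) * π / k)
    fun a _ => hσ a
  rw [Fin.sum_univ_eq_sum_range (fun a => |cos (ψ + a * π / k)|)] at hψ
  exact hψ.trans (sum_abs_cos_le hk ψ)

lemma norm_sum_exp_I_mul_pi_div {k : ℕ} (hk : k ≠ 0) :
    ‖∑ a : Fin k, Complex.exp (Complex.I * (a : ℝ) * π / k)‖ = 1 / sin (π / (2 * k)) := by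
  have hs := sin_pi_div_two_mul_pos hk
  have hkC : (k : ℂ) ≠ 0 := by exact_mod_cast hk
  set z := Complex.exp (Complex.I * ↑(π / k))
  have hpow : ∀ a : ℕ, z ^ a = Complex.exp (Complex.I * (a : ℝ) * π / k) := fun a => by
    rw [← Complex.exp_nat_mul]; push_cast; ring_nf
  have hzk : z ^ k = -1 := by
    rw [hpow, show Complex.I * ((k : ℝ) : ℂ) * π / k = π * Complex.I by push_cast; field_simp,
      Complex.exp_pi_mul_I]
  have hz : ‖z - 1‖ = 2 * sin (π / (2 * k)) := by
    rw [Complex.norm_exp_I_mul_ofReal_sub_one, div_div, mul_comm (k : ℝ), Real.norm_eq_abs,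
      abs_of_pos (by positivity)]
  have hgeom : ‖∑ a ∈ Finset.range k, z ^ a‖ * ‖z - 1‖ = 2 := by
    rw [← norm_mul, geom_sum_mul, hzk]; norm_num
  rw [Fin.sum_univ_eq_sum_range (fun a => Complex.exp (Complex.I * (a : ℝ) * π / k)), eq_div_iff hs.ne']
  simp_rw [← hpow]
  rw [hz] at hgeom
  linarith

/-- For `k ≥ 3`, the maximum over sign vectors `σ ∈ {±1}^k` of
`|∑_a σ_a e^{i a π / k}|²` equals `1 / sin²(π/(2k))`, and the maximum is achieved
by the all-ones vector. -/
theorem max_sign_vector_exponential_sum (k : ℕ) (hk : 3 ≤ k) :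
    IsGreatest
      {x : ℝ | ∃ σ : Fin k → ℝ, (∀ a, σ a = 1 ∨ σ a = -1) ∧
        x = ‖∑ a : Fin k,
              (σ a : ℂ) * Complex.exp (Complex.I * (a : ℝ) * π / k)‖ ^ 2}
      (1 / Real.sin (π / (2 * k)) ^ 2) ∧
    ‖∑ a : Fin k, Complex.exp (Complex.I * (a : ℝ) * π / k)‖ ^ 2
      = 1 / Real.sin (π / (2 * k)) ^ 2 := by
  have hk0 : k ≠ 0 := by omega
  have hones : ‖∑ a : Fin k, Complex.exp (Complex.I * (a : ℝ) * π / k)‖ ^ 2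
      = 1 / sin (π / (2 * k)) ^ 2 := by
    rw [norm_sum_exp_I_mul_pi_div hk0, div_pow, one_pow]
  refine ⟨⟨⟨fun _ => 1, fun _ => Or.inl rfl, by simpa using hones.symm⟩, ?_⟩, hones⟩
  rintro x ⟨σ, hσ, rfl⟩
  have hσ' : ∀ a, |σ a| ≤ 1 := fun a => by rcases hσ a with h | h <;> simp [h]
  calc _ ≤ (1 / sin (π / (2 * k))) ^ 2 :=
        pow_le_pow_left₀ (norm_nonneg _) (norm_sum_mul_exp_I_mul_pi_div_le hk0 σ hσ') 2
    _ = 1 / sin (π / (2 * k)) ^ 2 := by rw [div_pow, one_pow]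
end

section
/- Classical bound: for any even N ≥ 2, any k ≥ 3, and any assignment of classical spins σ_a^{(i)} ∈ {−1,+1} (for i = 1,…,N, a = 0,…,k−1), the quantity B = (2/k)·∑_{a,b=0}^{k−1} ∑_{i≠j} σ_a^{(i)} σ_b^{(j)} cos(π(a−b)/k) satisfies B ≥ −2N/(k·sin²(π/(2k))); moreover this bound is also satisfied by all convex mixtures (local-hidden-variable models), and it is attained. -/
open Real

/-- The Bell expression `B = (2/k) ∑_{a,b} ∑_{i≠j} σ_a⁽ⁱ⁾ σ_b⁽ʲ⁾ cos(π(a-b)/k)`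
for a deterministic local strategy `σ`. -/
noncomputable def bellValue (N k : ℕ) (σ : Fin N → Fin k → ℝ) : ℝ :=
  (2 / (k : ℝ)) * ∑ a : Fin k, ∑ b : Fin k, ∑ i : Fin N, ∑ j : Fin N,
    if i ≠ j then σ i a * σ j b * Real.cos (π * ((a : ℝ) - (b : ℝ)) / k) else 0

/-!
With `ω = exp(iπ/k)` and `Z(x) = ∑ₐ xₐ ωᵃ`, the double sum `∑_{a,b} xₐ x_b cos(π(a-b)/k)` is
`|Z(x)|²`, so `B = (2/k) (|Z(∑ᵢ σ⁽ⁱ⁾)|² - ∑ᵢ |Z(σ⁽ⁱ⁾)|²) ≥ -(2/k) ∑ᵢ |Z(σ⁽ⁱ⁾)|²`.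
For `|εₐ| ≤ 1` we have `|Z(ε)|² = ∑ₐ εₐ Re(Z̄ ωᵃ) ≤ |Z(ε)| ∑ₐ |cos(φ + πa/k)|` with `φ = arg Z̄`,
and the last sum is at most `1 / sin(π/2k)`: `2 sin(π/2k) |cos u| = |sin(u + π/2k) - sin(u - π/2k)|`
is bounded by the integral of `|cos|` over an interval of length `π/k`, and these `k` intervals
tile one period, over which `|cos|` integrates to `2`. Equality: `|Z(1)| = |2 / (ω - 1)| =
1 / sin(π/2k)`, and alternating the sign from party to party makes `∑ᵢ σ⁽ⁱ⁾ = 0` when `N` is even.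
-/

namespace ChainedBell

open Finset

theorem sum_sum_ite_ne {ι M : Type*} [Fintype ι] [DecidableEq ι] [AddCommGroup M]
    (F : ι → ι → M) :
    ∑ i, ∑ j, (if i ≠ j then F i j else 0) = ∑ i, ∑ j, F i j - ∑ i, F i i := by
  rw [← sum_sub_distrib]
  refine sum_congr rfl fun i _ => ?_
  rw [← Fintype.sum_ite_eq i (F i), ← sum_sub_distrib]
  refine sum_congr rfl fun j _ => ?_
  by_cases h : i = j <;> simp [h]

theorem sum_sum_mul_cos_sub_eq_norm_sq {ι : Type*} [Fintype ι] (α x : ι → ℝ) :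
    ∑ a, ∑ b, x a * x b * Real.cos (α a - α b)
      = ‖∑ a, (x a : ℂ) * Complex.exp (α a * Complex.I)‖ ^ 2 := by
  simp only [Complex.sq_norm, Complex.normSq_apply, Complex.re_sum, Complex.im_sum,
    Complex.re_ofReal_mul, Complex.im_ofReal_mul, Complex.exp_ofReal_mul_I_re,
    Complex.exp_ofReal_mul_I_im, Real.cos_sub, sum_mul_sum, ← sum_add_distrib]
  exact sum_congr rfl fun a _ => sum_congr rfl fun b _ => by ring

theorem re_mul_exp_ofReal_mul_I (z : ℂ) (t : ℝ) :
    (z * Complex.exp (t * Complex.I)).re = ‖z‖ * Real.cos (Complex.arg z + t) := by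
  conv_lhs => rw [← Complex.norm_mul_exp_arg_mul_I z]
  rw [mul_assoc, ← Complex.exp_add, ← add_mul, ← Complex.ofReal_add, Complex.re_ofReal_mul,
    Complex.exp_ofReal_mul_I_re]

theorem integral_abs_cos_add_pi (c : ℝ) : ∫ t in c..c + π, |Real.cos t| = 2 := by
  have hper : Function.Periodic (fun t => |Real.cos t|) π := fun t => by
    simp only [Real.cos_add_pi, abs_neg]
  have hcos : Set.EqOn (fun t => |Real.cos t|) Real.cos (Set.uIcc (-(π / 2)) (π / 2)) :=
    fun t ht => by
      rw [Set.uIcc_of_le (by linarith [pi_pos])] at ht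
      exact abs_of_nonneg (Real.cos_nonneg_of_mem_Icc ht)
  rw [hper.intervalIntegral_add_eq c (-(π / 2)), show -(π / 2) + π = π / 2 by ring,
    intervalIntegral.integral_congr hcos, integral_cos]
  norm_num

theorem two_mul_abs_sin_mul_cos_le_integral {u δ : ℝ} (hδ : 0 ≤ δ) :
    2 * |Real.sin δ * Real.cos u| ≤ ∫ t in (u - δ)..(u + δ), |Real.cos t| :=
  calc 2 * |Real.sin δ * Real.cos u| = |Real.sin (u + δ) - Real.sin (u - δ)| := by
        rw [Real.sin_add, Real.sin_sub, ← abs_two, ← abs_mul]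
        ring_nf
    _ = |∫ t in (u - δ)..(u + δ), Real.cos t| := by rw [integral_cos]
    _ ≤ ∫ t in (u - δ)..(u + δ), |Real.cos t| :=
        intervalIntegral.abs_integral_le_integral_abs (by linarith)

theorem sin_pi_div_two_mul_pos {k : ℕ} (hk : 0 < k) : 0 < Real.sin (π / (2 * k)) := by
  have hk' : (1 : ℝ) < 2 * k := by
    have : (1 : ℝ) ≤ k := by exact_mod_cast hk
    linarith
  exact Real.sin_pos_of_pos_of_lt_pi (by positivity) (div_lt_self pi_pos hk')

theorem sum_abs_cos_add_le {k : ℕ} (hk : 0 < k) (φ : ℝ) :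
    ∑ a ∈ range k, |Real.cos (φ + π * a / k)| ≤ 1 / Real.sin (π / (2 * k)) := by
  set δ := π / (2 * k) with hδ
  have hs : 0 < Real.sin δ := sin_pi_div_two_mul_pos hk
  have hk' : (k : ℝ) ≠ 0 := by positivity
  set x : ℕ → ℝ := fun a => φ + π * a / k - δ with hx
  have hstep : ∀ a : ℕ, 2 * |Real.sin δ * Real.cos (φ + π * a / k)|
      ≤ ∫ t in (x a)..(x (a + 1)), |Real.cos t| := fun a => by
    convert two_mul_abs_sin_mul_cos_le_integral (u := φ + π * a / k) (δ := δ) (by positivity)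
      using 2
    simp only [hx, hδ]
    push_cast
    field_simp
    ring
  have htile : ∫ t in (x 0)..(x k), |Real.cos t| = 2 := by
    rw [show x k = x 0 + π by simp only [hx]; field_simp; ring, integral_abs_cos_add_pi]
  have hint : ∀ a < k,
      IntervalIntegrable (fun t => |Real.cos t|) MeasureTheory.volume (x a) (x (a + 1)) :=
    fun _ _ => Real.continuous_cos.abs.intervalIntegrable _ _
  have hscaled : 2 * (Real.sin δ * ∑ a ∈ range k, |Real.cos (φ + π * a / k)|) ≤ 2 :=
    calc 2 * (Real.sin δ * ∑ a ∈ range k, |Real.cos (φ + π * a / k)|)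
        = ∑ a ∈ range k, 2 * |Real.sin δ * Real.cos (φ + π * a / k)| := by
          simp only [mul_sum, abs_mul, abs_of_pos hs]
      _ ≤ ∑ a ∈ range k, ∫ t in (x a)..(x (a + 1)), |Real.cos t| := sum_le_sum fun a _ => hstep a
      _ = 2 := by rw [intervalIntegral.sum_integral_adjacent_intervals hint, htile]
  rw [le_div_iff₀ hs]
  linarith

noncomputable def phasor (k : ℕ) (x : Fin k → ℝ) : ℂ :=
  ∑ a : Fin k, (x a : ℂ) * Complex.exp ((π * a / k : ℝ) * Complex.I)

theorem phasor_smul (k : ℕ) (c : ℝ) (x : Fin k → ℝ) : phasor k (c • x) = c * phasor k x := by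
  simp only [phasor, mul_sum, Pi.smul_apply, smul_eq_mul, Complex.ofReal_mul, mul_assoc]

theorem bellValue_eq (N k : ℕ) (σ : Fin N → Fin k → ℝ) :
    bellValue N k σ = 2 / k * (‖phasor k (∑ i, σ i)‖ ^ 2 - ∑ i, ‖phasor k (σ i)‖ ^ 2) := by
  have hangle : ∀ a b : Fin k, π * ((a : ℝ) - b) / k = π * a / k - π * b / k := fun a b => by
    ring
  simp only [bellValue, hangle, sum_sum_ite_ne, sum_sub_distrib]
  simp only [phasor, ← sum_sum_mul_cos_sub_eq_norm_sq, Finset.sum_apply]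
  congr 2
  · simp only [← sum_mul, ← mul_sum]
  · exact (sum_congr rfl fun a _ => sum_comm).trans sum_comm

theorem norm_phasor_le {k : ℕ} (hk : 0 < k) {ε : Fin k → ℝ} (hε : ∀ a, |ε a| ≤ 1) :
    ‖phasor k ε‖ ≤ 1 / Real.sin (π / (2 * k)) := by
  set Z := phasor k ε
  have hs := sin_pi_div_two_mul_pos hk
  have key : ‖Z‖ ^ 2 ≤ ‖Z‖ * (1 / Real.sin (π / (2 * k))) :=
    calc ‖Z‖ ^ 2 = (starRingEnd ℂ Z * Z).re := by
          rw [← Complex.normSq_eq_conj_mul_self, Complex.ofReal_re, Complex.sq_norm]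
      _ = ∑ a : Fin k, ε a * (starRingEnd ℂ Z * Complex.exp ((π * a / k : ℝ) * Complex.I)).re := by
          simp only [Z, phasor, mul_sum, Complex.re_sum, mul_left_comm _ (ε _ : ℂ),
            Complex.re_ofReal_mul]
      _ ≤ ∑ a : Fin k, |(starRingEnd ℂ Z * Complex.exp ((π * a / k : ℝ) * Complex.I)).re| :=
          sum_le_sum fun a _ => (le_abs_self _).trans <| by
            rw [abs_mul]; exact mul_le_of_le_one_left (abs_nonneg _) (hε a)
      _ = ‖Z‖ * ∑ a ∈ range k, |Real.cos (Complex.arg (starRingEnd ℂ Z) + π * a / k)| := by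
          simp only [re_mul_exp_ofReal_mul_I, Complex.norm_conj, abs_mul, abs_norm, ← mul_sum]
          exact congrArg _ <| Fin.sum_univ_eq_sum_range
            (fun a : ℕ => |Real.cos (Complex.arg (starRingEnd ℂ Z) + π * a / k)|) k
      _ ≤ ‖Z‖ * (1 / Real.sin (π / (2 * k))) :=
          mul_le_mul_of_nonneg_left (sum_abs_cos_add_le hk _) (norm_nonneg _)
  have hpos : 0 < 1 / Real.sin (π / (2 * k)) := by positivity
  nlinarith [norm_nonneg Z]

theorem norm_phasor_one {k : ℕ} (hk : 0 < k) : ‖phasor k 1‖ = 1 / Real.sin (π / (2 * k)) := by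
  set ω := Complex.exp ((π / k : ℝ) * Complex.I)
  have hk' : (k : ℝ) ≠ 0 := by positivity
  have hs := sin_pi_div_two_mul_pos hk
  have hpow : ∀ a : ℕ, Complex.exp ((π * a / k : ℝ) * Complex.I) = ω ^ a := fun a => by
    rw [← Complex.exp_nat_mul]
    push_cast
    ring_nf
  have hωk : ω ^ k = -1 := by
    rw [← hpow, mul_div_cancel_right₀ _ hk', Complex.exp_pi_mul_I]
  have hnorm : ‖ω - 1‖ = 2 * Real.sin (π / (2 * k)) := by
    rw [show ω = Complex.exp (Complex.I * (π / k : ℝ)) from congrArg _ (mul_comm _ _),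
      Complex.norm_exp_I_mul_ofReal_sub_one, div_div, mul_comm (k : ℝ),
      Real.norm_of_nonneg (by positivity)]
  have hω : ω ≠ 1 := fun h => by
    rw [h, sub_self, norm_zero] at hnorm
    linarith
  have hsum : phasor k 1 = ∑ a ∈ range k, ω ^ a := by
    simp only [phasor, Pi.one_apply, Complex.ofReal_one, one_mul, hpow]
    exact Fin.sum_univ_eq_sum_range (ω ^ ·) k
  rw [hsum, geom_sum_eq hω, hωk, norm_div, hnorm, show (-1 - 1 : ℂ) = -2 by norm_num, norm_neg,
    Complex.norm_ofNat, div_mul_cancel_left₀ two_ne_zero, one_div]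

theorem neg_two_mul_div_le_bellValue {N k : ℕ} (hk : 0 < k) {σ : Fin N → Fin k → ℝ}
    (hσ : ∀ i a, |σ i a| ≤ 1) :
    -(2 * (N : ℝ)) / (k * Real.sin (π / (2 * k)) ^ 2) ≤ bellValue N k σ := by
  have hs := sin_pi_div_two_mul_pos hk
  have hlocal : ∑ i, ‖phasor k (σ i)‖ ^ 2 ≤ N * (1 / Real.sin (π / (2 * k))) ^ 2 := by
    calc ∑ i, ‖phasor k (σ i)‖ ^ 2 ≤ ∑ _i : Fin N, (1 / Real.sin (π / (2 * k))) ^ 2 :=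
          sum_le_sum fun i _ => pow_le_pow_left₀ (norm_nonneg _) (norm_phasor_le hk (hσ i)) 2
      _ = N * (1 / Real.sin (π / (2 * k))) ^ 2 := by simp
  rw [bellValue_eq]
  calc -(2 * (N : ℝ)) / (k * Real.sin (π / (2 * k)) ^ 2)
      = 2 / k * (0 - N * (1 / Real.sin (π / (2 * k))) ^ 2) := by
        field_simp
        ring
    _ ≤ 2 / k * (‖phasor k (∑ i, σ i)‖ ^ 2 - ∑ i, ‖phasor k (σ i)‖ ^ 2) := by
        gcongr
        positivity

theorem bellValue_alternating {N k : ℕ} (hN : Even N) (hk : 0 < k) :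
    bellValue N k (fun i _ => (-1) ^ (i : ℕ))
      = -(2 * (N : ℝ)) / (k * Real.sin (π / (2 * k)) ^ 2) := by
  have hs := sin_pi_div_two_mul_pos hk
  have hsum : ∑ i : Fin N, (fun _ : Fin k => (-1 : ℝ) ^ (i : ℕ)) = 0 := by
    ext a
    rw [Finset.sum_apply, Fin.sum_neg_one_pow, if_pos hN, Pi.zero_apply]
  have hparty : ∀ i : Fin N,
      ‖phasor k (fun _ => (-1 : ℝ) ^ (i : ℕ))‖ = 1 / Real.sin (π / (2 * k)) := fun i => by
      rw [show (fun _ : Fin k => (-1 : ℝ) ^ (i : ℕ)) = (-1 : ℝ) ^ (i : ℕ) • 1 from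
        funext fun _ => (mul_one _).symm, phasor_smul, norm_mul, norm_phasor_one hk]
      simp
  have hzero : phasor k 0 = 0 := by simp [phasor]
  rw [bellValue_eq, hsum, hzero, norm_zero]
  simp only [hparty, sum_const, card_univ, Fintype.card_fin, nsmul_eq_mul]
  field_simp
  ring

end ChainedBell

open ChainedBell Finset in
theorem classical_bound_chained_bell_general (N k : ℕ) (hNeven : Even N)
    (hk : 3 ≤ k) :
    (∀ σ : Fin N → Fin k → ℝ, (∀ i a, σ i a = 1 ∨ σ i a = -1) →
      -(2 * (N : ℝ)) / ((k : ℝ) * Real.sin (π / (2 * k)) ^ 2) ≤ bellValue N k σ) ∧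
    (∀ (Λ : Type) [Fintype Λ] (p : Λ → ℝ) (σ : Λ → Fin N → Fin k → ℝ),
      (∀ l, 0 ≤ p l) → (∑ l, p l) = 1 →
      (∀ l i a, σ l i a = 1 ∨ σ l i a = -1) →
      -(2 * (N : ℝ)) / ((k : ℝ) * Real.sin (π / (2 * k)) ^ 2)
        ≤ ∑ l, p l * bellValue N k (σ l)) ∧
    (∃ σ : Fin N → Fin k → ℝ, (∀ i a, σ i a = 1 ∨ σ i a = -1) ∧
      bellValue N k σ = -(2 * (N : ℝ)) / ((k : ℝ) * Real.sin (π / (2 * k)) ^ 2)) := by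
  have hk0 : 0 < k := by omega
  have habs {σ : Fin N → Fin k → ℝ} (hσ : ∀ i a, σ i a = 1 ∨ σ i a = -1) :
      ∀ i a, |σ i a| ≤ 1 := fun i a => by
    rcases hσ i a with h | h <;> simp [h]
  refine ⟨fun σ hσ => neg_two_mul_div_le_bellValue hk0 (habs hσ), ?_, ?_⟩
  · intro Λ _ p σ hp hp1 hσ
    calc -(2 * (N : ℝ)) / ((k : ℝ) * Real.sin (π / (2 * k)) ^ 2)
        = ∑ l, p l * (-(2 * (N : ℝ)) / ((k : ℝ) * Real.sin (π / (2 * k)) ^ 2)) := by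
          rw [← sum_mul, hp1, one_mul]
      _ ≤ ∑ l, p l * bellValue N k (σ l) := sum_le_sum fun l _ =>
          mul_le_mul_of_nonneg_left (neg_two_mul_div_le_bellValue hk0 (habs (hσ l))) (hp l)
  · exact ⟨_, fun i _ => neg_one_pow_eq_or ℝ i, bellValue_alternating hNeven hk0⟩

/-- Classical bound: for even `N ≥ 2` and `k ≥ 3`, every deterministic assignment of
classical spins `σ_a⁽ⁱ⁾ ∈ {±1}` satisfies `B ≥ -2N/(k sin²(π/(2k)))`; the same bound
holds for all convex mixtures of deterministic strategies (local-hidden-variable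
models); and the bound is attained. -/
theorem classical_bound_chained_bell (N k : ℕ) (hN : 2 ≤ N) (hNeven : Even N)
    (hk : 3 ≤ k) :
    (∀ σ : Fin N → Fin k → ℝ, (∀ i a, σ i a = 1 ∨ σ i a = -1) →
      -(2 * (N : ℝ)) / ((k : ℝ) * Real.sin (π / (2 * k)) ^ 2) ≤ bellValue N k σ) ∧
    (∀ (Λ : Type) [Fintype Λ] (p : Λ → ℝ) (σ : Λ → Fin N → Fin k → ℝ),
      (∀ l, 0 ≤ p l) → (∑ l, p l) = 1 →
      (∀ l i a, σ l i a = 1 ∨ σ l i a = -1) →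
      -(2 * (N : ℝ)) / ((k : ℝ) * Real.sin (π / (2 * k)) ^ 2)
        ≤ ∑ l, p l * bellValue N k (σ l)) ∧
    (∃ σ : Fin N → Fin k → ℝ, (∀ i a, σ i a = 1 ∨ σ i a = -1) ∧
      bellValue N k σ = -(2 * (N : ℝ)) / ((k : ℝ) * Real.sin (π / (2 * k)) ^ 2)) :=
  classical_bound_chained_bell_general N k hNeven hk
end

section
/- For N even, there exists an assignment σ_a^{(i)} ∈ {−1,+1} with ∑_{i=1}^N σ_a^{(i)} = 0 for every a ∈ {0,…,k−1}, for which B = (2/k)∑_{a,b}∑_{i≠j} σ_a^{(i)}σ_b^{(j)} cos(π(a−b)/k) achieves the value −2N/(k sin²(π/(2k))). -/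
/-!
Take a setting-independent strategy `σ_a⁽ⁱ⁾ = τ_i` with `τ` balanced (half the parties `+1`, half
`-1`). Then `∑_{i≠j} τ_i τ_j = (∑ τ)² - ∑ τ² = -N`, so the Bell value factors as
`(2/k) (-N) ∑_{a,b} cos(π(a-b)/k)`. That double sum is `|∑_{a<k} ω^a|²` for `ω = e^{iπ/k}`; since
`ω^k = -1`, `(∑_{a<k} ω^a)(ω - 1) = -2`, and `|ω - 1|² = 4 sin²(π/(2k))`.
-/

open Real

section

open Complex

theorem sum_sum_cos_sub_eq_normSq {ι : Type*} [Fintype ι] (f : ι → ℝ) :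
    ∑ a, ∑ b, Real.cos (f a - f b) = normSq (∑ a, exp (f a * I)) := by
  simp only [normSq_apply, re_sum, im_sum, exp_ofReal_mul_I_re, exp_ofReal_mul_I_im,
    Finset.sum_mul_sum, ← Finset.sum_add_distrib, Real.cos_sub]

theorem normSq_exp_mul_I_sub_one (θ : ℝ) :
    normSq (exp (θ * I) - 1) = 4 * Real.sin (θ / 2) ^ 2 := by
  have hθ : θ = 2 * (θ / 2) := by ring
  simp only [normSq_apply, sub_re, sub_im, exp_ofReal_mul_I_re, exp_ofReal_mul_I_im,
    one_re, one_im, sub_zero]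
  rw [hθ, Real.cos_two_mul, Real.sin_two_mul, ← hθ]
  linear_combination (4 * (Real.cos (θ / 2) ^ 2 - 1)) * Real.sin_sq_add_cos_sq (θ / 2)

theorem normSq_sum_exp_pi_div_mul_I {k : ℕ} (hk : 0 < k) :
    normSq (∑ a : Fin k, exp (↑(π / k * a) * I)) = 1 / Real.sin (π / (2 * k)) ^ 2 := by
  have hk0 : (k : ℂ) ≠ 0 := by exact_mod_cast hk.ne'
  set ω := exp (↑(π / k) * I)
  have hpow (a : ℕ) : exp (↑(π / k * a) * I) = ω ^ a := by
    rw [← Complex.exp_nat_mul]; push_cast; ring_nf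
  have hωk : ω ^ k = -1 := by
    rw [← hpow, ← Complex.exp_pi_mul_I]; congr 2; push_cast; field_simp
  have hgeom := congrArg normSq (geom_sum_mul ω k)
  rw [hωk, map_mul, normSq_exp_mul_I_sub_one, ← Fin.sum_univ_eq_sum_range, div_div,
    mul_comm (k : ℝ), show normSq (-1 - 1 : ℂ) = 4 by norm_num] at hgeom
  simp only [← hpow] at hgeom
  exact eq_one_div_of_mul_eq_one_left (by linear_combination hgeom / 4)

end

theorem sum_sum_cos_pi_mul_sub_div {k : ℕ} (hk : 0 < k) :
    ∑ a : Fin k, ∑ b : Fin k, Real.cos (π * ((a : ℝ) - b) / k)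
      = 1 / Real.sin (π / (2 * k)) ^ 2 := by
  simp_rw [mul_div_right_comm π, mul_sub]
  rw [sum_sum_cos_sub_eq_normSq (fun a : Fin k => π / k * a), normSq_sum_exp_pi_div_mul_I hk]

theorem sum_sum_ite_ne_mul {ι R : Type*} [Fintype ι] [DecidableEq ι] [CommRing R] (τ : ι → R) :
    ∑ i, ∑ j, (if i ≠ j then τ i * τ j else 0) = (∑ i, τ i) ^ 2 - ∑ i, τ i ^ 2 := by
  simp only [sq, Finset.sum_mul_sum, ← Finset.sum_sub_distrib, ← Finset.sum_filter,
    Finset.filter_ne, Finset.mem_univ, Finset.sum_erase_eq_sub]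

theorem sum_sum_sum_sum_ite_ne_mul_mul {α ι R : Type*} [Fintype α] [Fintype ι] [DecidableEq ι]
    [CommRing R] (τ : ι → R) (K : α → α → R) :
    ∑ a, ∑ b, ∑ i, ∑ j, (if i ≠ j then τ i * τ j * K a b else 0)
      = ((∑ i, τ i) ^ 2 - ∑ i, τ i ^ 2) * ∑ a, ∑ b, K a b := by
  have hfactor (a b : α) : ∑ i, ∑ j, (if i ≠ j then τ i * τ j * K a b else 0)
      = (∑ i, ∑ j, if i ≠ j then τ i * τ j else 0) * K a b := by
    simp only [Finset.sum_mul, ite_zero_mul]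
  simp only [hfactor, sum_sum_ite_ne_mul, Finset.mul_sum]

theorem exists_balanced_signs {R : Type*} [Ring R] {N : ℕ} (hN : Even N) :
    ∃ τ : Fin N → R, (∀ i, τ i = 1 ∨ τ i = -1) ∧ ∑ i, τ i = 0 := by
  obtain ⟨m, rfl⟩ := hN
  refine ⟨Fin.append (fun _ => 1) (fun _ => -1), fun i => ?_, ?_⟩
  · refine Fin.addCases (fun i => ?_) (fun i => ?_) i
    · exact .inl (Fin.append_left _ _ i)
    · exact .inr (Fin.append_right _ _ i)
  · simp only [Fin.sum_univ_add, Fin.append_left, Fin.append_right, Finset.sum_neg_distrib,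
      add_neg_cancel]

theorem exists_balanced_strategy_attaining_classical_bound_general
    (N k : ℕ) (hNeven : Even N) (hk : 3 ≤ k) :
    ∃ σ : Fin N → Fin k → ℝ,
      (∀ i a, σ i a = 1 ∨ σ i a = -1) ∧
      (∀ a : Fin k, (∑ i : Fin N, σ i a) = 0) ∧
      (2 / (k : ℝ)) * (∑ a : Fin k, ∑ b : Fin k, ∑ i : Fin N, ∑ j : Fin N,
          if i ≠ j then σ i a * σ j b * Real.cos (π * ((a : ℝ) - (b : ℝ)) / k) else 0)
        = -(2 * (N : ℝ)) / ((k : ℝ) * Real.sin (π / (2 * k)) ^ 2) := by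
  obtain ⟨τ, hτ_sign, hτ_sum⟩ := exists_balanced_signs (R := ℝ) hNeven
  have hτ_sq (i : Fin N) : τ i ^ 2 = 1 := by rcases hτ_sign i with h | h <;> simp [h]
  refine ⟨fun i _ => τ i, fun i _ => hτ_sign i, fun _ => hτ_sum, ?_⟩
  rw [sum_sum_sum_sum_ite_ne_mul_mul, hτ_sum, Finset.sum_congr rfl fun i _ => hτ_sq i,
    sum_sum_cos_pi_mul_sub_div (by omega)]
  simp only [Finset.sum_const, Finset.card_univ, Fintype.card_fin, nsmul_eq_mul, mul_one]
  ring

/-- For `N` even and `k ≥ 3`, there is a sign assignment `σ_a⁽ⁱ⁾ ∈ {±1}` with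
`∑_i σ_a⁽ⁱ⁾ = 0` for every setting `a`, whose Bell value
`B = (2/k) ∑_{a,b} ∑_{i≠j} σ_a⁽ⁱ⁾ σ_b⁽ʲ⁾ cos(π(a-b)/k)` equals
`-2N/(k sin²(π/(2k)))`. -/
theorem exists_balanced_strategy_attaining_classical_bound
    (N k : ℕ) (hN : 2 ≤ N) (hNeven : Even N) (hk : 3 ≤ k) :
    ∃ σ : Fin N → Fin k → ℝ,
      (∀ i a, σ i a = 1 ∨ σ i a = -1) ∧
      (∀ a : Fin k, (∑ i : Fin N, σ i a) = 0) ∧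
      (2 / (k : ℝ)) * (∑ a : Fin k, ∑ b : Fin k, ∑ i : Fin N, ∑ j : Fin N,
          if i ≠ j then σ i a * σ j b * Real.cos (π * ((a : ℝ) - (b : ℝ)) / k) else 0)
        = -(2 * (N : ℝ)) / ((k : ℝ) * Real.sin (π / (2 * k)) ^ 2) :=
  exists_balanced_strategy_attaining_classical_bound_general N k hNeven hk
end

section
/- Quantum bound: let H be a (finite-dimensional) complex Hilbert space and for i = 1,…,N and a = 0,…,k−1 let σ̄_a^{(i)} be self-adjoint operators on H with (σ̄_a^{(i)})² = 1 and [σ̄_a^{(i)}, σ̄_b^{(j)}] = 0 whenever i ≠ j. Then for any unit vector ψ, B := (2/k)∑_{a,b}∑_{i≠j} ⟨ψ| σ̄_a^{(i)} σ̄_b^{(j)} |ψ⟩ cos(π(a−b)/k) ≥ −Nk. -/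
/-!
Put `v i a := σ̄_a⁽ⁱ⁾ ψ`, unit vectors of `H` viewed as a real inner product space; since
`σ̄_a⁽ⁱ⁾` is self-adjoint, `Re ⟨ψ, σ̄_a⁽ⁱ⁾ σ̄_b⁽ʲ⁾ ψ⟩ = ⟪v i a, v j b⟫`. With `θ a = π a / k`,
the kernel `cos (θ a - θ b) = cos θ_a cos θ_b + sin θ_a sin θ_b` is a Gram kernel of rank two,
so `Q y := ∑_{a,b} ⟪y a, y b⟫ cos (θ a - θ b) = ‖∑ cos θ_a • y a‖² + ‖∑ sin θ_a • y a‖² ≥ 0`.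
The off-diagonal sum is `Q (∑ i, v i) - ∑ i, Q (v i) ≥ -∑ i, Q (v i)`. The coefficient vectors
`(cos θ_a)_a` and `(sin θ_a)_a` are orthogonal of squared length `k / 2` (the `k`-th roots of
unity `e^{2iθ_a}` sum to zero), so `Q` is at most `k / 2` times `∑ ‖y a‖²`, i.e. `Q (v i) ≤ k² / 2`.
-/

open Real Finset
open scoped RealInnerProductSpace

section TrigSums

variable {k : ℕ}

theorem sum_cexp_two_mul_pi_mul_div_mul_I_eq_zero (hk : 2 ≤ k) :
    ∑ a : Fin k, Complex.exp ((2 * (π * a / k) : ℝ) * Complex.I) = 0 := by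
  have hk0 : k ≠ 0 := by omega
  rw [← (Complex.isPrimitiveRoot_exp k hk0).geom_sum_eq_zero (by omega),
    ← Fin.sum_univ_eq_sum_range]
  refine sum_congr rfl fun a _ => ?_
  rw [← Complex.exp_nat_mul]
  congr 1
  have : (k : ℂ) ≠ 0 := by exact_mod_cast hk0
  push_cast
  field_simp

theorem sum_cos_two_mul_pi_mul_div_eq_zero (hk : 2 ≤ k) :
    ∑ a : Fin k, cos (2 * (π * a / k)) = 0 := by
  simpa only [Complex.re_sum, Complex.exp_ofReal_mul_I_re, Complex.zero_re] using
    congrArg Complex.re (sum_cexp_two_mul_pi_mul_div_mul_I_eq_zero hk)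

theorem sum_sin_two_mul_pi_mul_div_eq_zero (hk : 2 ≤ k) :
    ∑ a : Fin k, sin (2 * (π * a / k)) = 0 := by
  simpa only [Complex.im_sum, Complex.exp_ofReal_mul_I_im, Complex.zero_im] using
    congrArg Complex.im (sum_cexp_two_mul_pi_mul_div_mul_I_eq_zero hk)

theorem sum_cos_sq_pi_mul_div (hk : 2 ≤ k) :
    ∑ a : Fin k, cos (π * a / k) ^ 2 = k / 2 := by
  simp only [cos_sq, sum_add_distrib, ← sum_div, sum_cos_two_mul_pi_mul_div_eq_zero hk]
  simp

theorem sum_sin_sq_pi_mul_div (hk : 2 ≤ k) :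
    ∑ a : Fin k, sin (π * a / k) ^ 2 = k / 2 := by
  simp only [sin_sq, sum_sub_distrib, sum_cos_sq_pi_mul_div hk, sum_const, card_univ,
    Fintype.card_fin, nsmul_eq_mul, mul_one]
  ring

theorem sum_cos_mul_sin_pi_mul_div (hk : 2 ≤ k) :
    ∑ a : Fin k, cos (π * a / k) * sin (π * a / k) = 0 := by
  have h : ∀ x : ℝ, cos x * sin x = sin (2 * x) / 2 := fun x => by rw [sin_two_mul]; ring
  simp only [h, ← sum_div, sum_sin_two_mul_pi_mul_div_eq_zero hk, zero_div]

end TrigSums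

section RealInnerProductSpace

variable {ι E : Type*} [Fintype ι] [NormedAddCommGroup E] [InnerProductSpace ℝ E]

theorem sum_sum_mul_mul_inner_eq_norm_sq (c : ι → ℝ) (y : ι → E) :
    ∑ a, ∑ b, c a * c b * ⟪y a, y b⟫ = ‖∑ a, c a • y a‖ ^ 2 := by
  rw [← real_inner_self_eq_norm_sq, sum_inner]
  simp only [inner_sum, real_inner_smul_left, real_inner_smul_right]
  exact sum_congr rfl fun a _ => sum_congr rfl fun b _ => by ring

theorem sum_sum_inner_mul_cos_sub (θ : ι → ℝ) (y : ι → E) :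
    ∑ a, ∑ b, ⟪y a, y b⟫ * cos (θ a - θ b)
      = ‖∑ a, cos (θ a) • y a‖ ^ 2 + ‖∑ a, sin (θ a) • y a‖ ^ 2 := by
  simp only [← sum_sum_mul_mul_inner_eq_norm_sq, ← sum_add_distrib, cos_sub]
  exact sum_congr rfl fun a _ => sum_congr rfl fun b _ => by ring

/-- Expand `∑ a, ‖l • x a - c a • C - s a • S‖² ≥ 0` with `C = ∑ c • x`, `S = ∑ s • x`. -/
theorem mul_norm_sq_add_norm_sq_le (c s : ι → ℝ) (l : ℝ) (hc : ∑ a, c a ^ 2 = l)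
    (hs : ∑ a, s a ^ 2 = l) (hcs : ∑ a, c a * s a = 0) (x : ι → E) :
    l * (‖∑ a, c a • x a‖ ^ 2 + ‖∑ a, s a • x a‖ ^ 2) ≤ l ^ 2 * ∑ a, ‖x a‖ ^ 2 := by
  set C := ∑ a, c a • x a
  set S := ∑ a, s a • x a
  have hxC : ∑ a, c a * ⟪x a, C⟫ = ‖C‖ ^ 2 := by
    simp only [← real_inner_smul_left, ← sum_inner, C, real_inner_self_eq_norm_sq]
  have hxS : ∑ a, s a * ⟪x a, S⟫ = ‖S‖ ^ 2 := by
    simp only [← real_inner_smul_left, ← sum_inner, S, real_inner_self_eq_norm_sq]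
  have hexpand : ∀ a, ‖l • x a - c a • C - s a • S‖ ^ 2
      = l ^ 2 * ‖x a‖ ^ 2 + c a ^ 2 * ‖C‖ ^ 2 + s a ^ 2 * ‖S‖ ^ 2
        - 2 * l * (c a * ⟪x a, C⟫) - 2 * l * (s a * ⟪x a, S⟫)
        + 2 * (c a * s a) * ⟪C, S⟫ := fun a => by
    simp only [← real_inner_self_eq_norm_sq, inner_sub_left, inner_sub_right,
      real_inner_smul_left, real_inner_smul_right, real_inner_comm (x a), real_inner_comm C S]
    ring
  have hsum : ∑ a, ‖l • x a - c a • C - s a • S‖ ^ 2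
      = l ^ 2 * ∑ a, ‖x a‖ ^ 2 - l * (‖C‖ ^ 2 + ‖S‖ ^ 2) := by
    simp only [hexpand, sum_add_distrib, sum_sub_distrib, ← sum_mul, ← mul_sum, hc, hs, hcs,
      hxC, hxS]
    ring
  linarith [sum_nonneg fun a (_ : a ∈ univ) => sq_nonneg ‖l • x a - c a • C - s a • S‖]

theorem neg_sum_le_sum_offDiag_inner_mul_cos_sub {κ : Type*} [Fintype κ] [DecidableEq κ]
    (θ : ι → ℝ) (v : κ → ι → E) :
    -∑ i, (‖∑ a, cos (θ a) • v i a‖ ^ 2 + ‖∑ a, sin (θ a) • v i a‖ ^ 2)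
      ≤ ∑ a, ∑ b, ∑ i, ∑ j, if i ≠ j then ⟪v i a, v j b⟫ * cos (θ a - θ b) else 0 := by
  have hoff : ∀ a b, ∑ i, ∑ j, (if i ≠ j then ⟪v i a, v j b⟫ * cos (θ a - θ b) else 0)
      = ⟪∑ i, v i a, ∑ j, v j b⟫ * cos (θ a - θ b)
        - ∑ i, ⟪v i a, v i b⟫ * cos (θ a - θ b) := fun a b => by
    simp only [← sum_filter, filter_ne, sum_erase_eq_sub (mem_univ _), sum_sub_distrib,
      sum_inner, inner_sum, sum_mul]
    rw [sum_comm]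
  have hdiag : ∑ a, ∑ b, ∑ i, ⟪v i a, v i b⟫ * cos (θ a - θ b)
      = ∑ i, (‖∑ a, cos (θ a) • v i a‖ ^ 2 + ‖∑ a, sin (θ a) • v i a‖ ^ 2) := by
    simp only [← sum_sum_inner_mul_cos_sub]
    rw [sum_congr rfl fun a _ => sum_comm]
    exact sum_comm
  have hfull : 0 ≤ ∑ a, ∑ b, ⟪∑ i, v i a, ∑ j, v j b⟫ * cos (θ a - θ b) := by
    rw [sum_sum_inner_mul_cos_sub]
    positivity
  simp only [hoff, sum_sub_distrib, hdiag]
  linarith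

theorem norm_sq_sum_cos_smul_add_norm_sq_sum_sin_smul_le {k : ℕ} (hk : 2 ≤ k) (x : Fin k → E)
    (hx : ∀ a, ‖x a‖ ≤ 1) :
    ‖∑ a : Fin k, cos (π * a / k) • x a‖ ^ 2 + ‖∑ a : Fin k, sin (π * a / k) • x a‖ ^ 2
      ≤ k ^ 2 / 2 := by
  have hk0 : (0 : ℝ) < k / 2 := by positivity
  have hx2 : ∑ a, ‖x a‖ ^ 2 ≤ k := by
    calc ∑ a, ‖x a‖ ^ 2 ≤ ∑ _a : Fin k, (1 : ℝ) :=
          sum_le_sum fun a _ => pow_le_one₀ (norm_nonneg _) (hx a)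
      _ = k := by simp
  have h := mul_norm_sq_add_norm_sq_le _ _ _ (sum_cos_sq_pi_mul_div hk)
    (sum_sin_sq_pi_mul_div hk) (sum_cos_mul_sin_pi_mul_div hk) x
  refine le_of_mul_le_mul_left (h.trans ?_) hk0
  calc ((k : ℝ) / 2) ^ 2 * ∑ a, ‖x a‖ ^ 2 ≤ ((k : ℝ) / 2) ^ 2 * k := by gcongr
    _ = (k : ℝ) / 2 * ((k : ℝ) ^ 2 / 2) := by ring

end RealInnerProductSpace

theorem quantum_bound_chained_bell_general (N k : ℕ) (hk : 3 ≤ k)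
    (H : Type*) [NormedAddCommGroup H] [InnerProductSpace ℂ H] [FiniteDimensional ℂ H]
    (σ : Fin N → Fin k → (H →L[ℂ] H))
    (hsa : ∀ i a, IsSelfAdjoint (σ i a))
    (hsq : ∀ i a, σ i a * σ i a = 1)
    (ψ : H) (hψ : ‖ψ‖ = 1) :
    -((N : ℝ) * k) ≤ (2 / (k : ℝ)) * ∑ a : Fin k, ∑ b : Fin k, ∑ i : Fin N, ∑ j : Fin N,
      if i ≠ j then
        (inner ℂ ψ (((σ i a * σ j b) : H →L[ℂ] H) ψ) : ℂ).re
          * Real.cos (π * ((a : ℝ) - (b : ℝ)) / k)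
      else 0 := by
  let : InnerProductSpace ℝ H := InnerProductSpace.complexToReal
  set θ : Fin k → ℝ := fun a => π * a / k
  set v : Fin N → Fin k → H := fun i a => σ i a ψ
  have hterm : ∀ i j a b, (inner ℂ ψ ((σ i a * σ j b) ψ)).re * cos (π * ((a : ℝ) - b) / k)
      = ⟪v i a, v j b⟫ * cos (θ a - θ b) := fun i j a b => by
    have hsym : inner ℂ ψ (σ i a (σ j b ψ)) = inner ℂ (v i a) (v j b) :=
      ((hsa i a).isSymmetric ψ (σ j b ψ)).symm
    have hθ : π * ((a : ℝ) - b) / k = θ a - θ b := by simp only [θ]; ring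
    rw [hθ]
    exact congrArg (fun z : ℂ => z.re * cos (θ a - θ b)) hsym
  have hunit : ∀ i a, ‖v i a‖ = 1 := fun i a => by
    have hmem : σ i a ∈ unitary (H →L[ℂ] H) := by
      rw [Unitary.mem_iff, (hsa i a).star_eq, hsq, and_self]
    rw [← hψ]
    exact ContinuousLinearMap.norm_map_of_mem_unitary hmem ψ
  simp only [hterm]
  calc -((N : ℝ) * k) = 2 / k * -∑ _i : Fin N, (k : ℝ) ^ 2 / 2 := by
        simp only [sum_const, card_univ, Fintype.card_fin, nsmul_eq_mul, mul_neg, neg_inj]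
        field_simp
    _ ≤ 2 / k * -∑ i, (‖∑ a, cos (θ a) • v i a‖ ^ 2 + ‖∑ a, sin (θ a) • v i a‖ ^ 2) := by
        gcongr with i
        exact norm_sq_sum_cos_smul_add_norm_sq_sum_sin_smul_le (by omega) (v i)
          fun a => (hunit i a).le
    _ ≤ _ := by
        gcongr
        exact neg_sum_le_sum_offDiag_inner_mul_cos_sub θ v

/-- Quantum bound: if `σ̄_a⁽ⁱ⁾` are self-adjoint operators squaring to the identity,
with operators of distinct parties commuting, then for any unit vector `ψ` the Bell
value `B = (2/k) ∑_{a,b} ∑_{i≠j} ⟨ψ, σ̄_a⁽ⁱ⁾ σ̄_b⁽ʲ⁾ ψ⟩ cos(π(a-b)/k)` satisfies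
`B ≥ -Nk`. -/
theorem quantum_bound_chained_bell (N k : ℕ) (hN : 2 ≤ N) (hk : 3 ≤ k)
    (H : Type*) [NormedAddCommGroup H] [InnerProductSpace ℂ H] [FiniteDimensional ℂ H]
    (σ : Fin N → Fin k → (H →L[ℂ] H))
    (hsa : ∀ i a, IsSelfAdjoint (σ i a))
    (hsq : ∀ i a, σ i a * σ i a = 1)
    (hcomm : ∀ i j a b, i ≠ j → Commute (σ i a) (σ j b))
    (ψ : H) (hψ : ‖ψ‖ = 1) :
    -((N : ℝ) * k) ≤ (2 / (k : ℝ)) * ∑ a : Fin k, ∑ b : Fin k, ∑ i : Fin N, ∑ j : Fin N,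
      if i ≠ j then
        (inner ℂ ψ (((σ i a * σ j b) : H →L[ℂ] H) ψ) : ℂ).re
          * Real.cos (π * ((a : ℝ) - (b : ℝ)) / k)
      else 0 :=
  quantum_bound_chained_bell_general N k hk H σ hsa hsq ψ hψ
end

section
/- Sum-of-squares decomposition: with B̄ the Bell operator B̄ = ∑_{a,b} M_{ab} ∑_{i≠j} σ̄_a^{(i)} σ̄_b^{(j)}, M_{ab} = (2/k)cos(π(a−b)/k), S̄_z = (2/k)∑_i ∑_a cos(aπ/k) σ̄_a^{(i)}, S̄_x = (2/k)∑_i ∑_a sin(aπ/k) σ̄_a^{(i)}, and Ā_a^{(i)} = σ̄_a^{(i)} − (2/k)∑_b cos(π(a−b)/k) σ̄_b^{(i)}, one has the operator identity B̄ + Nk·1 = (k/2)(S̄_z² + S̄_x²) + ∑_{i=1}^N ∑_{a=0}^{k−1} (Ā_a^{(i)})². -/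
open Real


lemma sum_exp_zero (k : ℕ) (hk : 2 ≤ k) :
    ∑ a : Fin k, Complex.exp ((2 * π * (a : ℝ) / k : ℝ) * Complex.I) = 0 := by
  have hk0 : (k : ℝ) ≠ 0 := by positivity
  have hkc : (k : ℂ) ≠ 0 := by exact_mod_cast (by positivity : (k:ℝ) ≠ 0)
  set ζ : ℂ := Complex.exp ((2 * π / k : ℝ) * Complex.I) with hζ
  have hpow : ∀ a : ℕ, Complex.exp ((2 * π * (a : ℝ) / k : ℝ) * Complex.I) = ζ ^ a := by
    intro a
    rw [hζ, ← Complex.exp_nat_mul]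
    congr 1
    push_cast
    ring
  have hζk : ζ ^ k = 1 := by
    rw [hζ, ← Complex.exp_nat_mul]
    convert Complex.exp_two_pi_mul_I using 2
    push_cast
    field_simp
  have hζ1 : ζ ≠ 1 := by
    intro h
    rw [hζ, Complex.exp_eq_one_iff] at h
    obtain ⟨n, hn⟩ := h
    have him := congrArg Complex.im hn
    simp at him
    have hπ : (0:ℝ) < π := Real.pi_pos
    have hkpos : (0:ℝ) < k := by positivity
    have h4 : (n : ℝ) = 1 / k := by
      field_simp at him ⊢
      nlinarith [him]
    have hn0 : (0:ℝ) < (n:ℝ) := by rw [h4]; positivity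
    have hn1 : (n:ℝ) < 1 := by
      rw [h4, div_lt_one hkpos]
      have : (2:ℝ) ≤ k := by exact_mod_cast hk
      linarith
    have h5 : (0:ℤ) < n := by exact_mod_cast hn0
    have h6 : (n:ℤ) < 1 := by exact_mod_cast hn1
    omega
  calc ∑ a : Fin k, Complex.exp ((2 * π * (a : ℝ) / k : ℝ) * Complex.I)
      = ∑ a ∈ Finset.range k, ζ ^ a := by
        rw [Finset.sum_range fun a => ζ ^ a]; exact Finset.sum_congr rfl fun a _ => hpow a
    _ = (ζ ^ k - 1) / (ζ - 1) := geom_sum_eq hζ1 k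
    _ = 0 := by rw [hζk]; simp

lemma sum_cos_zero (k : ℕ) (hk : 2 ≤ k) :
    ∑ a : Fin k, Real.cos (2 * π * (a : ℝ) / k) = 0 := by
  calc ∑ a : Fin k, Real.cos (2 * π * (a : ℝ) / k)
      = ∑ a : Fin k, (Complex.exp ((2 * π * (a : ℝ) / k : ℝ) * Complex.I)).re :=
        Finset.sum_congr rfl fun a _ => (Complex.exp_ofReal_mul_I_re _).symm
    _ = (∑ a : Fin k, Complex.exp ((2 * π * (a : ℝ) / k : ℝ) * Complex.I)).re :=
        (Complex.re_sum _ _).symm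
    _ = 0 := by rw [sum_exp_zero k hk]; rfl

lemma sum_sin_zero (k : ℕ) (hk : 2 ≤ k) :
    ∑ a : Fin k, Real.sin (2 * π * (a : ℝ) / k) = 0 := by
  calc ∑ a : Fin k, Real.sin (2 * π * (a : ℝ) / k)
      = ∑ a : Fin k, (Complex.exp ((2 * π * (a : ℝ) / k : ℝ) * Complex.I)).im :=
        Finset.sum_congr rfl fun a _ => (Complex.exp_ofReal_mul_I_im _).symm
    _ = (∑ a : Fin k, Complex.exp ((2 * π * (a : ℝ) / k : ℝ) * Complex.I)).im :=
        (Complex.im_sum _ _).symm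
    _ = 0 := by rw [sum_exp_zero k hk]; rfl

lemma sum_cos_shift (k : ℕ) (hk : 2 ≤ k) (φ : ℝ) :
    ∑ a : Fin k, Real.cos (2 * π * (a : ℝ) / k + φ) = 0 := by
  simp only [Real.cos_add]
  rw [Finset.sum_sub_distrib, ← Finset.sum_mul, ← Finset.sum_mul,
    sum_cos_zero k hk, sum_sin_zero k hk]
  ring

lemma sum_prod_cos (k : ℕ) (hk : 2 ≤ k) (x y : ℝ) :
    ∑ a : Fin k, Real.cos (π * ((a : ℝ) - x) / k) * Real.cos (π * ((a : ℝ) - y) / k)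
      = ((k : ℝ) / 2) * Real.cos (π * (x - y) / k) := by
  have h1 : ∀ a : Fin k, Real.cos (π * ((a : ℝ) - x) / k) * Real.cos (π * ((a : ℝ) - y) / k)
      = (Real.cos (π * (x - y) / k) + Real.cos (2 * π * (a : ℝ) / k + (- π * (x + y) / k))) / 2 := by
    intro a
    have e1 : π * ((a:ℝ) - x) / k + π * ((a:ℝ) - y) / k
        = 2 * π * (a:ℝ) / k + (- π * (x + y) / k) := by ring
    have e2 : π * ((a:ℝ) - x) / k - π * ((a:ℝ) - y) / k = -(π * (x - y) / k) := by ring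
    have h := Real.cos_add (π * ((a:ℝ) - x) / k) (π * ((a:ℝ) - y) / k)
    have h' := Real.cos_sub (π * ((a:ℝ) - x) / k) (π * ((a:ℝ) - y) / k)
    rw [e1] at h
    rw [e2, Real.cos_neg] at h'
    linarith
  rw [Finset.sum_congr rfl fun a _ => h1 a]
  rw [← Finset.sum_div, Finset.sum_add_distrib, sum_cos_shift k hk,
    Finset.sum_const, Finset.card_univ, Fintype.card_fin, nsmul_eq_mul]
  ring

-- reorder (i,j,a,b) ↦ (a,b,i,j)
lemma reorder4 {M : Type*} [AddCommMonoid M] {α β γ δ : Type*}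
    [Fintype α] [Fintype β] [Fintype γ] [Fintype δ]
    (f : α → β → γ → δ → M) :
    ∑ i : α, ∑ j : β, ∑ a : γ, ∑ b : δ, f i j a b
      = ∑ a : γ, ∑ b : δ, ∑ i : α, ∑ j : β, f i j a b := by
  calc ∑ i : α, ∑ j : β, ∑ a : γ, ∑ b : δ, f i j a b
      = ∑ i : α, ∑ a : γ, ∑ j : β, ∑ b : δ, f i j a b :=
        Finset.sum_congr rfl fun i _ => Finset.sum_comm
    _ = ∑ a : γ, ∑ i : α, ∑ j : β, ∑ b : δ, f i j a b := Finset.sum_comm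
    _ = ∑ a : γ, ∑ i : α, ∑ b : δ, ∑ j : β, f i j a b :=
        Finset.sum_congr rfl fun a _ => Finset.sum_congr rfl fun i _ => Finset.sum_comm
    _ = ∑ a : γ, ∑ b : δ, ∑ i : α, ∑ j : β, f i j a b :=
        Finset.sum_congr rfl fun a _ => Finset.sum_comm

lemma step2 {R : Type*} [Ring R] [Module ℂ R] [SMulCommClass ℂ R R] [IsScalarTower ℂ R R]
    {N k : ℕ} (σ : Fin N → Fin k → R) (z x : Fin k → ℂ) (w : Fin k → Fin k → ℂ) (e c : ℂ)
    (hd : ∀ a b, c * ((z a * z b) * (e * e)) + c * ((x a * x b) * (e * e)) = e * w a b) :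
    c • ((e • ∑ i, ∑ a, z a • σ i a) * (e • ∑ i, ∑ a, z a • σ i a)
       + (e • ∑ i, ∑ a, x a • σ i a) * (e • ∑ i, ∑ a, x a • σ i a))
    = ∑ a, ∑ b, (e * w a b) • ∑ i, ∑ j, σ i a * σ j b := by
  have expand : ∀ u : Fin k → ℂ,
      (e • ∑ i, ∑ a, u a • σ i a) * (e • ∑ i, ∑ a, u a • σ i a)
        = ∑ a, ∑ b, ∑ i, ∑ j, ((u a * u b) * (e * e)) • (σ i a * σ j b) := by
    intro u
    rw [smul_mul_assoc, mul_smul_comm, smul_smul, Finset.sum_mul_sum]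
    have h1 : ∀ i i' : Fin N,
        (∑ a, u a • σ i a) * (∑ b, u b • σ i' b)
          = ∑ a, ∑ b, (u a * u b) • (σ i a * σ i' b) := by
      intro i i'
      rw [Finset.sum_mul_sum]
      exact Finset.sum_congr rfl fun a _ => Finset.sum_congr rfl fun b _ => by
        rw [smul_mul_assoc, mul_smul_comm, smul_smul]
    rw [Finset.sum_congr rfl fun i _ => Finset.sum_congr rfl fun j _ => h1 i j]
    rw [reorder4 (fun i j a b => (u a * u b) • (σ i a * σ j b))]
    rw [Finset.smul_sum]
    refine Finset.sum_congr rfl fun a _ => ?_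
    rw [Finset.smul_sum]
    refine Finset.sum_congr rfl fun b _ => ?_
    rw [Finset.smul_sum]
    refine Finset.sum_congr rfl fun i _ => ?_
    rw [Finset.smul_sum]
    refine Finset.sum_congr rfl fun j _ => ?_
    rw [smul_smul]
    ring_nf
  rw [expand z, expand x, smul_add, Finset.smul_sum, Finset.smul_sum]
  rw [← Finset.sum_add_distrib]
  refine Finset.sum_congr rfl fun a _ => ?_
  rw [Finset.smul_sum, Finset.smul_sum, ← Finset.sum_add_distrib]
  refine Finset.sum_congr rfl fun b _ => ?_
  rw [Finset.smul_sum, Finset.smul_sum, ← Finset.sum_add_distrib, Finset.smul_sum]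
  refine Finset.sum_congr rfl fun i _ => ?_
  rw [Finset.smul_sum, Finset.smul_sum, ← Finset.sum_add_distrib, Finset.smul_sum]
  refine Finset.sum_congr rfl fun j _ => ?_
  rw [smul_smul, smul_smul, ← add_smul, hd a b]

lemma step3 {R : Type*} [Ring R] [Module ℂ R] [SMulCommClass ℂ R R] [IsScalarTower ℂ R R]
    {N k : ℕ} (σ : Fin N → Fin k → R)
    (hsq : ∀ i a, σ i a * σ i a = 1)
    (w : Fin k → Fin k → ℂ) (e : ℂ)
    (hwsymm : ∀ a b, w a b = w b a)
    (hww : ∀ b b', ∑ a, (e * w a b) * (e * w a b') = e * w b b') :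
    ∑ i, ∑ a, (σ i a - e • ∑ b, w a b • σ i b) * (σ i a - e • ∑ b, w a b • σ i b)
      = (N * k) • (1 : R) - ∑ a, ∑ b, (e * w a b) • ∑ i, σ i a * σ i b := by
  have key : ∀ i, ∑ a, (σ i a - e • ∑ b, w a b • σ i b) * (σ i a - e • ∑ b, w a b • σ i b)
      = k • (1 : R) - ∑ a, ∑ b, (e * w a b) • (σ i a * σ i b) := by
    intro i
    have hXY : ∀ a, σ i a * (e • ∑ b, w a b • σ i b) = ∑ b, (e * w a b) • (σ i a * σ i b) := by
      intro a
      rw [mul_smul_comm, Finset.mul_sum, Finset.smul_sum]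
      exact Finset.sum_congr rfl fun b _ => by rw [mul_smul_comm, smul_smul]
    have hYX : ∀ a, (e • ∑ b, w a b • σ i b) * σ i a = ∑ b, (e * w a b) • (σ i b * σ i a) := by
      intro a
      rw [smul_mul_assoc, Finset.sum_mul, Finset.smul_sum]
      exact Finset.sum_congr rfl fun b _ => by rw [smul_mul_assoc, smul_smul]
    have hYY : ∀ a, (e • ∑ b, w a b • σ i b) * (e • ∑ b, w a b • σ i b)
        = ∑ b, ∑ b', ((e * w a b) * (e * w a b')) • (σ i b * σ i b') := by
      intro a
      rw [smul_mul_assoc, mul_smul_comm, smul_smul, Finset.sum_mul_sum, Finset.smul_sum]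
      refine Finset.sum_congr rfl fun b _ => ?_
      rw [Finset.smul_sum]
      refine Finset.sum_congr rfl fun b' _ => ?_
      rw [smul_mul_assoc, mul_smul_comm, smul_smul, smul_smul]
      ring_nf
    have expand : ∀ a, (σ i a - e • ∑ b, w a b • σ i b) * (σ i a - e • ∑ b, w a b • σ i b)
        = 1 - (∑ b, (e * w a b) • (σ i a * σ i b)) - (∑ b, (e * w a b) • (σ i b * σ i a))
          + ∑ b, ∑ b', ((e * w a b) * (e * w a b')) • (σ i b * σ i b') := by
      intro a
      rw [mul_sub, sub_mul, sub_mul, hsq, hXY, hYX, hYY]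
      abel
    rw [Finset.sum_congr rfl fun a _ => expand a]
    rw [Finset.sum_add_distrib, Finset.sum_sub_distrib, Finset.sum_sub_distrib]
    have e1 : ∑ _a : Fin k, (1 : R) = k • 1 := by simp
    have e2 : ∑ a, ∑ b, (e * w a b) • (σ i b * σ i a)
        = ∑ a, ∑ b, (e * w a b) • (σ i a * σ i b) := by
      rw [Finset.sum_comm]
      exact Finset.sum_congr rfl fun a _ => Finset.sum_congr rfl fun b _ => by
        rw [hwsymm a b]
    have e3 : ∑ a : Fin k, ∑ b, ∑ b', ((e * w a b) * (e * w a b')) • (σ i b * σ i b')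
        = ∑ a, ∑ b, (e * w a b) • (σ i a * σ i b) := by
      have r1 : ∑ a : Fin k, ∑ b, ∑ b', ((e * w a b) * (e * w a b')) • (σ i b * σ i b')
          = ∑ b, ∑ b', ∑ a : Fin k, ((e * w a b) * (e * w a b')) • (σ i b * σ i b') := by
        rw [Finset.sum_comm]
        exact Finset.sum_congr rfl fun b _ => Finset.sum_comm
      rw [r1]
      refine Finset.sum_congr rfl fun b _ => Finset.sum_congr rfl fun b' _ => ?_
      rw [← Finset.sum_smul, hww b b']
    rw [e1, e2, e3]
    abel
  rw [Finset.sum_congr rfl fun i _ => key i, Finset.sum_sub_distrib]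
  congr 1
  · rw [Finset.sum_const, Finset.card_univ, Fintype.card_fin, smul_smul]
  · have r1 : ∑ i : Fin N, ∑ a, ∑ b, (e * w a b) • (σ i a * σ i b)
        = ∑ a, ∑ b, ∑ i : Fin N, (e * w a b) • (σ i a * σ i b) := by
      rw [Finset.sum_comm]
      exact Finset.sum_congr rfl fun a _ => Finset.sum_comm
    rw [r1]
    exact Finset.sum_congr rfl fun a _ => Finset.sum_congr rfl fun b _ => by
      rw [Finset.smul_sum]

lemma sos_algebra {R : Type*} [Ring R] [Module ℂ R] [SMulCommClass ℂ R R] [IsScalarTower ℂ R R]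
    {N k : ℕ} (σ : Fin N → Fin k → R)
    (hsq : ∀ i a, σ i a * σ i a = 1)
    (z x : Fin k → ℂ) (w : Fin k → Fin k → ℂ) (e c : ℂ)
    (hd : ∀ a b, c * ((z a * z b) * (e * e)) + c * ((x a * x b) * (e * e)) = e * w a b)
    (hwsymm : ∀ a b, w a b = w b a)
    (hww : ∀ b b', ∑ a, (e * w a b) * (e * w a b') = e * w b b') :
    (∑ a, ∑ b, (e * w a b) • ∑ i, ∑ j, (if i ≠ j then σ i a * σ j b else 0)) + (N * k) • (1 : R)
      = c • ((e • ∑ i, ∑ a, z a • σ i a) * (e • ∑ i, ∑ a, z a • σ i a)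
           + (e • ∑ i, ∑ a, x a • σ i a) * (e • ∑ i, ∑ a, x a • σ i a))
        + ∑ i, ∑ a, (σ i a - e • ∑ b, w a b • σ i b) * (σ i a - e • ∑ b, w a b • σ i b) := by
  rw [step2 σ z x w e c hd, step3 σ hsq w e hwsymm hww]
  have hinner : ∀ a b : Fin k, (∑ i, ∑ j, if i ≠ j then σ i a * σ j b else 0)
      = (∑ i, ∑ j, σ i a * σ j b) - ∑ i, σ i a * σ i b := by
    intro a b
    rw [← Finset.sum_sub_distrib]
    refine Finset.sum_congr rfl fun i _ => ?_
    have h : ∀ j, (if i ≠ j then σ i a * σ j b else 0)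
        = σ i a * σ j b - (if i = j then σ i a * σ j b else 0) := by
      intro j; by_cases h : i = j <;> simp [h]
    rw [Finset.sum_congr rfl fun j _ => h j, Finset.sum_sub_distrib, Finset.sum_ite_eq]
    simp
  have h2 : (∑ a, ∑ b, (e * w a b) • ∑ i, ∑ j, (if i ≠ j then σ i a * σ j b else 0))
      = (∑ a, ∑ b, (e * w a b) • ∑ i, ∑ j, σ i a * σ j b)
        - ∑ a, ∑ b, (e * w a b) • ∑ i, σ i a * σ i b := by
    rw [← Finset.sum_sub_distrib]
    refine Finset.sum_congr rfl fun a _ => ?_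
    rw [← Finset.sum_sub_distrib]
    refine Finset.sum_congr rfl fun b _ => ?_
    rw [hinner a b, smul_sub]
  rw [h2]
  abel

/-- Sum-of-squares decomposition of the Bell operator: with
`B̄ = ∑_{a,b} (2/k)cos(π(a-b)/k) ∑_{i≠j} σ̄_a⁽ⁱ⁾ σ̄_b⁽ʲ⁾`,
`S̄_z = (2/k) ∑_i ∑_a cos(aπ/k) σ̄_a⁽ⁱ⁾`, `S̄_x = (2/k) ∑_i ∑_a sin(aπ/k) σ̄_a⁽ⁱ⁾`, and
`Ā_a⁽ⁱ⁾ = σ̄_a⁽ⁱ⁾ - (2/k) ∑_b cos(π(a-b)/k) σ̄_b⁽ⁱ⁾`, one has the operator identity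
`B̄ + Nk·1 = (k/2)(S̄_z² + S̄_x²) + ∑_i ∑_a (Ā_a⁽ⁱ⁾)²`. -/
theorem bell_operator_sos_decomposition (N k : ℕ) (hN : 2 ≤ N) (hk : 3 ≤ k)
    (H : Type*) [NormedAddCommGroup H] [InnerProductSpace ℂ H] [CompleteSpace H]
    (σ : Fin N → Fin k → (H →L[ℂ] H))
    (hsa : ∀ i a, IsSelfAdjoint (σ i a))
    (hsq : ∀ i a, σ i a * σ i a = 1)
    (hcomm : ∀ i j a b, i ≠ j → Commute (σ i a) (σ j b))
    (Bop Sz Sx : H →L[ℂ] H) (A : Fin N → Fin k → (H →L[ℂ] H))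
    (hBop : Bop = ∑ a : Fin k, ∑ b : Fin k,
        (((2 / (k : ℝ)) * Real.cos (π * ((a : ℝ) - (b : ℝ)) / k) : ℝ) : ℂ) •
          ∑ i : Fin N, ∑ j : Fin N, if i ≠ j then σ i a * σ j b else 0)
    (hSz : Sz = (((2 / (k : ℝ)) : ℝ) : ℂ) •
        ∑ i : Fin N, ∑ a : Fin k, ((Real.cos ((a : ℝ) * π / k) : ℝ) : ℂ) • σ i a)
    (hSx : Sx = (((2 / (k : ℝ)) : ℝ) : ℂ) •
        ∑ i : Fin N, ∑ a : Fin k, ((Real.sin ((a : ℝ) * π / k) : ℝ) : ℂ) • σ i a)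
    (hA : ∀ i a, A i a = σ i a - (((2 / (k : ℝ)) : ℝ) : ℂ) •
        ∑ b : Fin k, ((Real.cos (π * ((a : ℝ) - (b : ℝ)) / k) : ℝ) : ℂ) • σ i b) :
    Bop + (((N : ℝ) * k : ℝ) : ℂ) • (1 : H →L[ℂ] H)
      = (((k : ℝ) / 2 : ℝ) : ℂ) • (Sz * Sz + Sx * Sx)
        + ∑ i : Fin N, ∑ a : Fin k, A i a * A i a := by
  have hk2 : 2 ≤ k := by omega
  have hkR : ((k:ℝ)) ≠ 0 := by positivity
  have hdR : ∀ a b : Fin k,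
      ((k:ℝ)/2) * ((Real.cos ((a:ℝ)*π/k) * Real.cos ((b:ℝ)*π/k)) * ((2/(k:ℝ)) * (2/(k:ℝ))))
        + ((k:ℝ)/2) * ((Real.sin ((a:ℝ)*π/k) * Real.sin ((b:ℝ)*π/k)) * ((2/(k:ℝ)) * (2/(k:ℝ))))
      = (2/(k:ℝ)) * Real.cos (π*((a:ℝ)-(b:ℝ))/k) := by
    intro a b
    have hcs : Real.cos (π*((a:ℝ)-(b:ℝ))/k)
        = Real.cos ((a:ℝ)*π/k) * Real.cos ((b:ℝ)*π/k)
          + Real.sin ((a:ℝ)*π/k) * Real.sin ((b:ℝ)*π/k) := by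
      rw [show π*((a:ℝ)-(b:ℝ))/k = (a:ℝ)*π/k - (b:ℝ)*π/k by ring, Real.cos_sub]
    rw [hcs]
    field_simp
  have hd : ∀ a b : Fin k,
      (((k : ℝ) / 2 : ℝ) : ℂ) * ((((Real.cos ((a : ℝ) * π / k) : ℝ) : ℂ) * ((Real.cos ((b : ℝ) * π / k) : ℝ) : ℂ))
          * ((((2 / (k : ℝ)) : ℝ) : ℂ) * (((2 / (k : ℝ)) : ℝ) : ℂ)))
        + (((k : ℝ) / 2 : ℝ) : ℂ) * ((((Real.sin ((a : ℝ) * π / k) : ℝ) : ℂ) * ((Real.sin ((b : ℝ) * π / k) : ℝ) : ℂ))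
          * ((((2 / (k : ℝ)) : ℝ) : ℂ) * (((2 / (k : ℝ)) : ℝ) : ℂ)))
      = (((2 / (k : ℝ)) : ℝ) : ℂ) * ((Real.cos (π * ((a : ℝ) - (b : ℝ)) / k) : ℝ) : ℂ) := by
    intro a b
    exact_mod_cast hdR a b
  have hwsymm : ∀ a b : Fin k,
      ((Real.cos (π * ((a : ℝ) - (b : ℝ)) / k) : ℝ) : ℂ)
        = ((Real.cos (π * ((b : ℝ) - (a : ℝ)) / k) : ℝ) : ℂ) := by
    intro a b
    have h : Real.cos (π*((a:ℝ)-(b:ℝ))/k) = Real.cos (π*((b:ℝ)-(a:ℝ))/k) := by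
      rw [show π*((a:ℝ)-(b:ℝ))/k = -(π*((b:ℝ)-(a:ℝ))/k) by ring, Real.cos_neg]
    exact congrArg Complex.ofReal h
  have hwwR : ∀ b b' : Fin k,
      ∑ a : Fin k, (2/(k:ℝ) * Real.cos (π*((a:ℝ)-(b:ℝ))/k)) * (2/(k:ℝ) * Real.cos (π*((a:ℝ)-(b':ℝ))/k))
        = (2/(k:ℝ)) * Real.cos (π*((b:ℝ)-(b':ℝ))/k) := by
    intro b b'
    have h0 := sum_prod_cos k hk2 (b:ℝ) (b':ℝ)
    calc ∑ a : Fin k, (2/(k:ℝ) * Real.cos (π*((a:ℝ)-(b:ℝ))/k)) * (2/(k:ℝ) * Real.cos (π*((a:ℝ)-(b':ℝ))/k))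
        = (2/(k:ℝ)) * (2/(k:ℝ)) * ∑ a : Fin k, Real.cos (π*((a:ℝ)-(b:ℝ))/k) * Real.cos (π*((a:ℝ)-(b':ℝ))/k) := by
          rw [Finset.mul_sum]
          exact Finset.sum_congr rfl fun a _ => by ring
      _ = _ := by rw [h0]; field_simp
  have hww : ∀ b b' : Fin k,
      ∑ a : Fin k, ((((2 / (k : ℝ)) : ℝ) : ℂ) * ((Real.cos (π * ((a : ℝ) - (b : ℝ)) / k) : ℝ) : ℂ))
          * ((((2 / (k : ℝ)) : ℝ) : ℂ) * ((Real.cos (π * ((a : ℝ) - (b' : ℝ)) / k) : ℝ) : ℂ))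
        = (((2 / (k : ℝ)) : ℝ) : ℂ) * ((Real.cos (π * ((b : ℝ) - (b' : ℝ)) / k) : ℝ) : ℂ) := by
    intro b b'
    exact_mod_cast hwwR b b'
  have halg := sos_algebra (N := N) (k := k) σ hsq
    (fun a => ((Real.cos ((a : ℝ) * π / k) : ℝ) : ℂ))
    (fun a => ((Real.sin ((a : ℝ) * π / k) : ℝ) : ℂ))
    (fun a b => ((Real.cos (π * ((a : ℝ) - (b : ℝ)) / k) : ℝ) : ℂ))
    ((((2 / (k : ℝ)) : ℝ) : ℂ)) ((((k : ℝ) / 2 : ℝ) : ℂ))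
    hd hwsymm hww
  have hnk : (((N : ℝ) * k : ℝ) : ℂ) • (1 : H →L[ℂ] H) = (N * k) • (1 : H →L[ℂ] H) := by
    push_cast
    rw [← Nat.cast_smul_eq_nsmul ℂ]
    push_cast
    ring_nf
  rw [hBop, hSz, hSx, hnk]
  simp only [hA]
  simp only [Complex.ofReal_mul]
  exact halg
end

section
/- If ψ is a unit vector achieving the quantum bound ⟨ψ|B̄|ψ⟩ = −Nk, then for each party i: (Z̄^{(i)})² ψ = ψ, (X̄^{(i)})² ψ = ψ, and (Z̄^{(i)} X̄^{(i)} + X̄^{(i)} Z̄^{(i)}) ψ = 0, where Z̄^{(i)} = (2/k)∑_a cos(aπ/k) σ̄_a^{(i)} and X̄^{(i)} = (2/k)∑_a sin(aπ/k) σ̄_a^{(i)}. -/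
/-!
Write `θₐ = aπ/k`, `uᵢₐ = σ̄ₐ⁽ⁱ⁾ψ`, `zᵢ = Z̄⁽ⁱ⁾ψ`, `xᵢ = X̄⁽ⁱ⁾ψ`. Since
`cos(θₐ - θ_b) = cos θₐ cos θ_b + sin θₐ sin θ_b` and the vectors `(cos θₐ)ₐ`, `(sin θₐ)ₐ` are
orthogonal with squared length `k/2`, the shifted expectation is a sum of squares:
`Re⟨ψ, B̄ψ⟩ + Nk = (k/2)(‖∑ᵢ zᵢ‖² + ‖∑ᵢ xᵢ‖²) + ∑ᵢₐ ‖uᵢₐ - cos θₐ zᵢ - sin θₐ xᵢ‖²`.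
At the bound every square vanishes, so `σ̄ₐ⁽ⁱ⁾` and the rotated operator
`cos θₐ Z̄⁽ⁱ⁾ + sin θₐ X̄⁽ⁱ⁾` agree on `ψ`, and the rotated operators of all parties sum to zero
on `ψ`. As the other parties' operators commute with party `i`'s, the two operators then also
agree on the image of `ψ` under the rotated operator, so the latter squares to the identity on
`ψ`. At `θ = 0` this gives `Z̄²ψ = ψ`; at `θ = π/k, 2π/k` it gives a nondegenerate linear system
for `X̄²ψ - ψ` and `(Z̄X̄ + X̄Z̄)ψ`.
-/

open Real Finset

theorem sum_exp_two_pi_mul_div_mul_I (k : ℕ) (hk : 2 ≤ k) :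
    ∑ a : Fin k, Complex.exp (2 * π * a / k * Complex.I) = 0 := by
  rw [← (Complex.isPrimitiveRoot_exp k (by omega)).geom_sum_eq_zero (by omega),
    Fin.sum_univ_eq_sum_range (fun a => Complex.exp (2 * π * a / k * Complex.I))]
  refine sum_congr rfl fun a _ => ?_
  rw [← Complex.exp_nat_mul]
  ring_nf

theorem sum_cos_two_pi_mul_div (k : ℕ) (hk : 2 ≤ k) : ∑ a : Fin k, cos (2 * π * a / k) = 0 := by
  simpa [Complex.re_sum, Complex.exp_re] using
    congrArg Complex.re (sum_exp_two_pi_mul_div_mul_I k hk)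

theorem sum_sin_two_pi_mul_div (k : ℕ) (hk : 2 ≤ k) : ∑ a : Fin k, sin (2 * π * a / k) = 0 := by
  simpa [Complex.im_sum, Complex.exp_im] using
    congrArg Complex.im (sum_exp_two_pi_mul_div_mul_I k hk)

theorem sum_cos_mul_pi_div_sq (k : ℕ) (hk : 2 ≤ k) : ∑ a : Fin k, cos (a * π / k) ^ 2 = k / 2 := by
  have h2 : ∀ a : Fin k, cos (a * π / k) ^ 2 = 1 / 2 + cos (2 * π * a / k) / 2 := fun a => by
    rw [cos_sq, show 2 * (a * π / k) = 2 * π * a / k by ring]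
  simp only [h2, sum_add_distrib, ← sum_div, sum_cos_two_pi_mul_div k hk, sum_const, card_univ,
    Fintype.card_fin, nsmul_eq_mul]
  ring

theorem sum_sin_mul_pi_div_sq (k : ℕ) (hk : 2 ≤ k) : ∑ a : Fin k, sin (a * π / k) ^ 2 = k / 2 := by
  have h := sum_cos_mul_pi_div_sq k hk
  simp only [sin_sq, sum_sub_distrib, sum_const, card_univ, Fintype.card_fin, nsmul_eq_mul, h]
  ring

theorem sum_cos_mul_sin_mul_pi_div (k : ℕ) (hk : 2 ≤ k) :
    ∑ a : Fin k, cos (a * π / k) * sin (a * π / k) = 0 := by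
  have h := sum_sin_two_pi_mul_div k hk
  have h2 : ∀ a : Fin k, cos (a * π / k) * sin (a * π / k) = sin (2 * π * a / k) / 2 := fun a => by
    rw [show 2 * π * a / k = 2 * (a * π / k) by ring, sin_two_mul]; ring
  simp only [h2, ← sum_div, h, zero_div]

theorem sin_nat_mul_pi_div_pos {n k : ℕ} (hn : 0 < n) (hnk : n < k) : 0 < sin (n * π / k) := by
  have hk : (0 : ℝ) < k := by exact_mod_cast hn.trans hnk
  apply sin_pos_of_pos_of_lt_pi (by positivity)
  rw [div_lt_iff₀ hk]
  exact mul_lt_mul_of_pos_right (by exact_mod_cast hnk) pi_pos |>.trans_eq (mul_comm _ _)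

section ChainedBell

variable {E : Type*} (k : ℕ)

noncomputable def chainedZ [AddCommGroup E] [Module ℝ E] (v : Fin k → E) : E :=
  (2 / k : ℝ) • ∑ a : Fin k, cos (a * π / k) • v a

noncomputable def chainedX [AddCommGroup E] [Module ℝ E] (v : Fin k → E) : E :=
  (2 / k : ℝ) • ∑ a : Fin k, sin (a * π / k) • v a

variable [NormedAddCommGroup E] [InnerProductSpace ℝ E] {ι : Type*} [Fintype ι] [DecidableEq ι]

theorem sum_norm_sub_smul_add_smul_sq {n : Type*} [Fintype n] {c s : n → ℝ} {r : ℝ}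
    (hc : ∑ a, c a ^ 2 = r) (hs : ∑ a, s a ^ 2 = r) (hcs : ∑ a, c a * s a = 0)
    {u : n → E} {z x : E} (hz : ∑ a, c a • u a = r • z) (hx : ∑ a, s a • u a = r • x) :
    ∑ a, ‖u a - (c a • z + s a • x)‖ ^ 2 = ∑ a, ‖u a‖ ^ 2 - r * (‖z‖ ^ 2 + ‖x‖ ^ 2) := by
  have hcross : ∑ a, inner ℝ (u a) (c a • z + s a • x) = r * (‖z‖ ^ 2 + ‖x‖ ^ 2) := by
    calc ∑ a, inner ℝ (u a) (c a • z + s a • x)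
        = inner ℝ (∑ a, c a • u a) z + inner ℝ (∑ a, s a • u a) x := by
          simp only [sum_inner, inner_add_right, real_inner_smul_left, real_inner_smul_right,
            sum_add_distrib]
      _ = r * (‖z‖ ^ 2 + ‖x‖ ^ 2) := by
          rw [hz, hx, real_inner_smul_left, real_inner_smul_left, real_inner_self_eq_norm_sq,
            real_inner_self_eq_norm_sq, mul_add]
  have hfit : ∑ a, ‖c a • z + s a • x‖ ^ 2 = r * (‖z‖ ^ 2 + ‖x‖ ^ 2) := by
    have h : ∀ a, ‖c a • z + s a • x‖ ^ 2
        = c a ^ 2 * ‖z‖ ^ 2 + c a * s a * (2 * inner ℝ z x) + s a ^ 2 * ‖x‖ ^ 2 := fun a => by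
      rw [norm_add_sq_real, norm_smul, norm_smul, real_inner_smul_left, real_inner_smul_right,
        norm_eq_abs, norm_eq_abs, mul_pow, mul_pow, sq_abs, sq_abs]
      ring
    simp only [h, sum_add_distrib, ← sum_mul, hc, hs, hcs]
    ring
  simp only [norm_sub_sq_real, sum_add_distrib, sum_sub_distrib, ← mul_sum, hcross, hfit]
  ring

theorem sum_sum_ite_ne_inner (y : ι → E) :
    ∑ i, ∑ j, (if i ≠ j then inner ℝ (y i) (y j) else 0) = ‖∑ i, y i‖ ^ 2 - ∑ i, ‖y i‖ ^ 2 := by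
  rw [← real_inner_self_eq_norm_sq, sum_inner, ← sum_sub_distrib]
  refine sum_congr rfl fun i _ => ?_
  rw [inner_sum, ← real_inner_self_eq_norm_sq, ← sum_filter, filter_ne,
    sum_erase_eq_sub (mem_univ i)]

/-- `Re ⟪ψ, B̄ ψ⟫` in terms of the vectors `u i a = σ̄ₐ⁽ⁱ⁾ ψ`. -/
noncomputable def chainedBellValue (u : ι → Fin k → E) : ℝ :=
  ∑ a : Fin k, ∑ b : Fin k, 2 / k * cos (π * (a - b) / k) *
    ∑ i, ∑ j, if i ≠ j then inner ℝ (u i a) (u j b) else 0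

theorem sum_sum_cos_mul_inner (v w : Fin k → E) :
    ∑ a : Fin k, ∑ b : Fin k, 2 / k * cos (π * (a - b) / k) * inner ℝ (v a) (w b)
      = k / 2 * (inner ℝ (chainedZ k v) (chainedZ k w)
        + inner ℝ (chainedX k v) (chainedX k w)) := by
  have hk : (k / 2 : ℝ) * (2 / k) ^ 2 = 2 / k := by
    rcases eq_or_ne (k : ℝ) 0 with h | h
    · simp [h]
    · field_simp
  have hcos : ∀ a b : Fin k, cos (π * (a - b) / k)
      = cos (a * π / k) * cos (b * π / k) + sin (a * π / k) * sin (b * π / k) := fun a b => by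
    rw [← cos_sub]; ring_nf
  simp only [chainedZ, chainedX, real_inner_smul_left, real_inner_smul_right, sum_inner]
  simp only [inner_sum, real_inner_smul_right, hcos, mul_sum, ← sum_add_distrib]
  refine sum_congr rfl fun a _ => sum_congr rfl fun b _ => ?_
  linear_combination -(cos (a * π / k) * cos (b * π / k) + sin (a * π / k) * sin (b * π / k))
    * inner ℝ (v a) (w b) * hk

variable {k}

theorem chainedBellValue_eq (u : ι → Fin k → E) :
    chainedBellValue k u = k / 2 * ∑ i, ∑ j, if i ≠ j then
      inner ℝ (chainedZ k (u i)) (chainedZ k (u j)) + inner ℝ (chainedX k (u i)) (chainedX k (u j))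
      else 0 := by
  simp only [chainedBellValue, mul_sum, mul_ite, mul_zero]
  simp_rw [sum_comm (s := (univ : Finset (Fin k))) (t := (univ : Finset ι))]
  refine sum_congr rfl fun i _ => sum_congr rfl fun j _ => ?_
  split_ifs
  · exact sum_sum_cos_mul_inner k (u i) (u j)
  · simp

theorem chainedBellValue_add_eq (hk : 2 ≤ k) (u : ι → Fin k → E) (hu : ∀ i a, ‖u i a‖ = 1) :
    chainedBellValue k u + Fintype.card ι * k
      = k / 2 * (‖∑ i, chainedZ k (u i)‖ ^ 2 + ‖∑ i, chainedX k (u i)‖ ^ 2)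
        + ∑ i, ∑ a : Fin k, ‖u i a
            - (cos (a * π / k) • chainedZ k (u i) + sin (a * π / k) • chainedX k (u i))‖ ^ 2 := by
  have hk1 : (k : ℝ) / 2 * (2 / k) = 1 := by field_simp
  have hres : ∀ i, ∑ a : Fin k,
      ‖u i a - (cos (a * π / k) • chainedZ k (u i) + sin (a * π / k) • chainedX k (u i))‖ ^ 2
        = k - k / 2 * (‖chainedZ k (u i)‖ ^ 2 + ‖chainedX k (u i)‖ ^ 2) := fun i => by
    rw [sum_norm_sub_smul_add_smul_sq (sum_cos_mul_pi_div_sq k hk) (sum_sin_mul_pi_div_sq k hk)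
      (sum_cos_mul_sin_mul_pi_div k hk)] <;> simp [hu, chainedZ, chainedX, smul_smul, hk1]
  simp only [chainedBellValue_eq, ite_add_zero, sum_add_distrib, sum_sum_ite_ne_inner, hres,
    sum_sub_distrib, sum_const, card_univ, nsmul_eq_mul, ← mul_sum]
  ring

theorem eq_of_chainedBellValue_eq_neg (hk : 2 ≤ k) (u : ι → Fin k → E) (hu : ∀ i a, ‖u i a‖ = 1)
    (h : chainedBellValue k u = -(Fintype.card ι * k)) :
    (∀ i a, u i a = cos (a * π / k) • chainedZ k (u i) + sin (a * π / k) • chainedX k (u i)) ∧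
      ∑ i, chainedZ k (u i) = 0 ∧ ∑ i, chainedX k (u i) = 0 := by
  have hsos := chainedBellValue_add_eq hk u hu
  rw [h, neg_add_cancel, eq_comm] at hsos
  obtain ⟨hZX, hres⟩ := (add_eq_zero_iff_of_nonneg (by positivity) (by positivity)).mp hsos
  obtain ⟨hZ, hX⟩ := (add_eq_zero_iff_of_nonneg (by positivity) (by positivity)).mp
    ((mul_eq_zero.mp hZX).resolve_left (by positivity))
  refine ⟨fun i a => ?_, by simpa using hZ, by simpa using hX⟩
  rw [sum_eq_zero_iff_of_nonneg fun _ _ => by positivity] at hres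
  have hia := (sum_eq_zero_iff_of_nonneg fun _ _ => by positivity).mp (hres i (mem_univ i)) a
    (mem_univ a)
  simpa [sub_eq_zero] using hia

end ChainedBell

theorem eq_zero_and_eq_zero_of_smul_add_smul_eq_zero {K M : Type*} [Field K] [AddCommGroup M]
    [Module K M] {a b c d : K} {u v : M} (h₁ : a • u + b • v = 0)
    (h₂ : c • u + d • v = 0) (hdet : a * d - b * c ≠ 0) : u = 0 ∧ v = 0 := by
  have hu : (a * d - b * c) • u = 0 := by linear_combination (norm := module) d • h₁ - b • h₂
  have hv : (a * d - b * c) • v = 0 := by linear_combination (norm := module) a • h₂ - c • h₁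
  exact ⟨(smul_eq_zero.mp hu).resolve_left hdet, (smul_eq_zero.mp hv).resolve_left hdet⟩

theorem smul_sum_smul_mem_span_range {R M ι : Type*} [Semiring R] [AddCommMonoid M]
    [Module R M] [Fintype ι] (x : ι → M) (r : R) (f : ι → R) :
    r • ∑ a, f a • x a ∈ Submodule.span R (Set.range x) :=
  Submodule.smul_mem _ r <| Submodule.sum_smul_mem _ f fun a _ => Submodule.subset_span ⟨a, rfl⟩

theorem Commute.of_mem_span_range {R A ι κ : Type*} [CommSemiring R] [Semiring A] [Algebra R A]
    {x : ι → A} {y : κ → A} (h : ∀ a b, Commute (x a) (y b)) {p q : A}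
    (hp : p ∈ Submodule.span R (Set.range x)) (hq : q ∈ Submodule.span R (Set.range y)) :
    Commute p q := by
  refine Commute.span_right ?_ q hq
  rintro _ ⟨b, rfl⟩
  refine Commute.span_left ?_ p hp
  rintro _ ⟨a, rfl⟩
  exact h a b

theorem mul_self_apply_eq_of_sum_apply_eq_zero {R M ι : Type*} [Ring R] [AddCommGroup M]
    [TopologicalSpace M] [IsTopologicalAddGroup M] [Module R M] [Fintype ι] [DecidableEq ι]
    {S : M →L[R] M} {L : ι → M →L[R] M} {ψ : M} {i : ι} (hS : (S * S) ψ = ψ)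
    (hSL : S ψ = L i ψ) (hsum : ∑ j, L j ψ = 0) (hcomm : ∀ j ≠ i, Commute (S - L i) (L j)) :
    (L i * L i) ψ = ψ := by
  have hT : ∀ j ≠ i, (S - L i) (L j ψ) = 0 := fun j hj => by
    rw [← mul_apply_eq_comp, (hcomm j hj).eq, mul_apply_eq_comp, sub_apply, hSL, sub_self,
      map_zero]
  have hLi : L i ψ = -∑ j ∈ univ.erase i, L j ψ := by
    rw [← add_sum_erase _ _ (mem_univ i)] at hsum
    exact eq_neg_of_add_eq_zero_left hsum
  have hSLi : S (L i ψ) = L i (L i ψ) := by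
    rw [← sub_eq_zero, ← sub_apply, hLi, map_neg, map_sum,
      sum_eq_zero fun j hj => hT j (ne_of_mem_erase hj), neg_zero]
  calc (L i * L i) ψ = S (L i ψ) := hSLi.symm
    _ = ψ := by rw [← hSL]; exact hS

section Rotation

variable {A : Type*} [Ring A] [Algebra ℂ A]

noncomputable def rotate (Z X : A) (φ : ℝ) : A := (cos φ : ℂ) • Z + (sin φ : ℂ) • X

theorem rotate_mem {p : Submodule ℂ A} {Z X : A} (hZ : Z ∈ p) (hX : X ∈ p) (φ : ℝ) :
    rotate Z X φ ∈ p :=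
  add_mem (p.smul_mem _ hZ) (p.smul_mem _ hX)

theorem rotate_zero (Z X : A) : rotate Z X 0 = Z := by simp [rotate]

theorem rotate_mul_rotate (Z X : A) (φ : ℝ) :
    rotate Z X φ * rotate Z X φ = ((cos φ ^ 2 : ℝ) : ℂ) • (Z * Z)
      + ((cos φ * sin φ : ℝ) : ℂ) • (Z * X + X * Z) + ((sin φ ^ 2 : ℝ) : ℂ) • (X * X) := by
  simp only [rotate, add_mul, mul_add, smul_mul_smul_comm, Complex.ofReal_pow,
    Complex.ofReal_mul, smul_add]
  module

end Rotation

section Operators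

variable {H : Type*} [NormedAddCommGroup H] [NormedSpace ℂ H]

noncomputable def chainedBellOperator {ι : Type*} [Fintype ι] [DecidableEq ι] (k : ℕ)
    (σ : ι → Fin k → (H →L[ℂ] H)) : H →L[ℂ] H :=
  ∑ a : Fin k, ∑ b : Fin k, (((2 / (k : ℝ)) * cos (π * ((a : ℝ) - (b : ℝ)) / k) : ℝ) : ℂ) •
    ∑ i, ∑ j, if i ≠ j then σ i a * σ j b else 0

theorem pauli_relations_of_rotate_mul_rotate {Z X : H →L[ℂ] H} {ψ : H} {θ : ℝ} (hθ : sin θ ≠ 0)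
    (h2θ : sin (2 * θ) ≠ 0)
    (h : ∀ n : ℕ, n ≤ 2 → (rotate Z X (n * θ) * rotate Z X (n * θ)) ψ = ψ) :
    (Z * Z) ψ = ψ ∧ (X * X) ψ = ψ ∧ (Z * X + X * Z) ψ = 0 := by
  have hZ : (Z * Z) ψ = ψ := by simpa [rotate_zero] using h 0 (by norm_num)
  have hlin : ∀ n : ℕ, n ≤ 2 → ((sin (n * θ) ^ 2 : ℝ) : ℂ) • ((X * X) ψ - ψ)
      + ((sin (n * θ) * cos (n * θ) : ℝ) : ℂ) • (Z * X + X * Z) ψ = 0 := fun n hn => by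
    have hn := h n hn
    have hpyth : ((sin (n * θ) ^ 2 : ℝ) : ℂ) + ((cos (n * θ) ^ 2 : ℝ) : ℂ) = 1 := by
      exact_mod_cast sin_sq_add_cos_sq (n * θ)
    rw [rotate_mul_rotate, add_apply, add_apply, smul_apply, smul_apply, smul_apply, hZ] at hn
    linear_combination (norm := module) hn - hpyth • ψ
  have hdet : sin θ ^ 2 * (sin (2 * θ) * cos (2 * θ)) - sin θ * cos θ * sin (2 * θ) ^ 2
      = -(sin θ ^ 2 * sin (2 * θ)) := by
    have h := sin_sub θ (2 * θ)
    rw [show θ - 2 * θ = -θ by ring, sin_neg] at h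
    linear_combination -(sin θ * sin (2 * θ)) * h
  have hdetC : ((sin θ ^ 2 : ℝ) : ℂ) * ((sin (2 * θ) * cos (2 * θ) : ℝ) : ℂ)
      - ((sin θ * cos θ : ℝ) : ℂ) * ((sin (2 * θ) ^ 2 : ℝ) : ℂ) ≠ 0 := by
    exact_mod_cast hdet ▸ neg_ne_zero.mpr (mul_ne_zero (pow_ne_zero 2 hθ) h2θ)
  have h1 := hlin 1 (by norm_num)
  have h2 := hlin 2 le_rfl
  simp only [Nat.cast_one, one_mul, Nat.cast_ofNat] at h1 h2
  obtain ⟨hX, hZX⟩ := eq_zero_and_eq_zero_of_smul_add_smul_eq_zero h1 h2 hdetC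
  exact ⟨hZ, sub_eq_zero.mp hX, hZX⟩

end Operators

section ChainedBellOperator

variable {H : Type*} [NormedAddCommGroup H] [InnerProductSpace ℂ H] [CompleteSpace H]
  {ι : Type*} [Fintype ι] [DecidableEq ι] {k : ℕ}

theorem IsSelfAdjoint.norm_apply_of_mul_self_eq_one {A : H →L[ℂ] H} (hA : IsSelfAdjoint A)
    (h : A * A = 1) (x : H) : ‖A x‖ = ‖x‖ :=
  ContinuousLinearMap.norm_map_of_mem_unitary
    (Unitary.mem_iff.mpr ⟨by rw [hA.star_eq, h], by rw [hA.star_eq, h]⟩) x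

section

attribute [local instance] InnerProductSpace.complexToReal

theorem re_inner_chainedBellOperator_apply {σ : ι → Fin k → (H →L[ℂ] H)}
    (hσ : ∀ i a, IsSelfAdjoint (σ i a)) (ψ : H) :
    (inner ℂ ψ (chainedBellOperator k σ ψ)).re = chainedBellValue k fun i a => σ i a ψ := by
  simp only [chainedBellOperator, chainedBellValue, _root_.sum_apply, smul_apply, inner_sum,
    inner_smul_right, Complex.re_sum, Complex.re_ofReal_mul]
  refine sum_congr rfl fun a _ => sum_congr rfl fun b _ => congrArg _ <|
    sum_congr rfl fun i _ => sum_congr rfl fun j _ => ?_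
  split_ifs
  · rw [mul_apply_eq_comp, ← ContinuousLinearMap.adjoint_inner_left, (hσ i a).adjoint_eq]
    rfl
  · simp

end

theorem eq_of_inner_chainedBellOperator_eq_neg (hk : 2 ≤ k) {σ : ι → Fin k → (H →L[ℂ] H)}
    (hσ : ∀ i a, IsSelfAdjoint (σ i a)) (hσ2 : ∀ i a, σ i a * σ i a = 1) {ψ : H} (hψ : ‖ψ‖ = 1)
    (h : inner ℂ ψ (chainedBellOperator k σ ψ) = -((Fintype.card ι * k : ℝ) : ℂ)) :
    (∀ i a, σ i a ψ = cos (a * π / k) • chainedZ k (fun b => σ i b ψ)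
        + sin (a * π / k) • chainedX k (fun b => σ i b ψ)) ∧
      ∑ i, chainedZ k (fun b => σ i b ψ) = 0 ∧ ∑ i, chainedX k (fun b => σ i b ψ) = 0 := by
  let _ : InnerProductSpace ℝ H := InnerProductSpace.complexToReal
  refine eq_of_chainedBellValue_eq_neg hk _ (fun i a => ?_) ?_
  · rw [(hσ i a).norm_apply_of_mul_self_eq_one (hσ2 i a), hψ]
  · rw [← re_inner_chainedBellOperator_apply hσ, h]
    simp

end ChainedBellOperator

theorem max_violation_pauli_relations_general (N k : ℕ) (hk : 3 ≤ k)
    (H : Type*) [NormedAddCommGroup H] [InnerProductSpace ℂ H] [CompleteSpace H]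
    (σ : Fin N → Fin k → (H →L[ℂ] H))
    (hsa : ∀ i a, IsSelfAdjoint (σ i a))
    (hsq : ∀ i a, σ i a * σ i a = 1)
    (hcomm : ∀ i j a b, i ≠ j → Commute (σ i a) (σ j b))
    (Bop : H →L[ℂ] H)
    (hBop : Bop = ∑ a : Fin k, ∑ b : Fin k,
        (((2 / (k : ℝ)) * Real.cos (π * ((a : ℝ) - (b : ℝ)) / k) : ℝ) : ℂ) •
          ∑ i : Fin N, ∑ j : Fin N, if i ≠ j then σ i a * σ j b else 0)
    (Z X : Fin N → (H →L[ℂ] H))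
    (hZ : ∀ i, Z i = (((2 / (k : ℝ)) : ℝ) : ℂ) •
        ∑ a : Fin k, ((Real.cos ((a : ℝ) * π / k) : ℝ) : ℂ) • σ i a)
    (hX : ∀ i, X i = (((2 / (k : ℝ)) : ℝ) : ℂ) •
        ∑ a : Fin k, ((Real.sin ((a : ℝ) * π / k) : ℝ) : ℂ) • σ i a)
    (ψ : H) (hψ : ‖ψ‖ = 1)
    (hmax : (inner ℂ ψ (Bop ψ) : ℂ) = -(((N : ℝ) * k : ℝ) : ℂ)) :
    ∀ i : Fin N,
      (Z i * Z i) ψ = ψ ∧ (X i * X i) ψ = ψ ∧ (Z i * X i + X i * Z i) ψ = 0 := by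
  obtain ⟨hσψ, hZsum, hXsum⟩ := eq_of_inner_chainedBellOperator_eq_neg (by omega) hsa hsq hψ
    (by rw [chainedBellOperator, ← hBop, hmax, Fintype.card_fin])
  have hZψ : ∀ j, Z j ψ = chainedZ k (fun b => σ j b ψ) := fun j => by
    simp only [hZ, chainedZ, smul_apply, _root_.sum_apply, Complex.coe_smul]
  have hXψ : ∀ j, X j ψ = chainedX k (fun b => σ j b ψ) := fun j => by
    simp only [hX, chainedX, smul_apply, _root_.sum_apply, Complex.coe_smul]
  have hmem : ∀ j φ, rotate (Z j) (X j) φ ∈ Submodule.span ℂ (Set.range (σ j)) := fun j =>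
    rotate_mem (hZ j ▸ smul_sum_smul_mem_span_range _ _ _)
      (hX j ▸ smul_sum_smul_mem_span_range _ _ _)
  intro i
  have hrot : ∀ a : Fin k,
      (rotate (Z i) (X i) (a * π / k) * rotate (Z i) (X i) (a * π / k)) ψ = ψ := fun a =>
    mul_self_apply_eq_of_sum_apply_eq_zero (L := fun j => rotate (Z j) (X j) (a * π / k))
      (by rw [hsq]; rfl)
      (by rw [hσψ, rotate, add_apply, smul_apply, smul_apply, Complex.coe_smul, Complex.coe_smul,
        hZψ, hXψ])
      (by simp only [rotate, add_apply, smul_apply, sum_add_distrib, ← smul_sum, hZψ, hXψ, hZsum,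
        hXsum, smul_zero, add_zero])
      fun j hj => Commute.of_mem_span_range (fun a b => hcomm i j a b hj.symm)
        (sub_mem (Submodule.subset_span ⟨a, rfl⟩) (hmem i _)) (hmem j _)
  refine pauli_relations_of_rotate_mul_rotate (θ := π / k) ?_ ?_ fun n hn => ?_
  · simpa using (sin_nat_mul_pi_div_pos one_pos (by omega : 1 < k)).ne'
  · simpa [mul_div_assoc] using (sin_nat_mul_pi_div_pos two_pos (by omega : 2 < k)).ne'
  · simpa [mul_div_assoc] using hrot ⟨n, by omega⟩

/-- If a unit vector `ψ` attains the quantum bound `⟨ψ, B̄ ψ⟩ = -Nk` of the generalized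
chained Bell operator, then for each party `i` the operators
`Z̄⁽ⁱ⁾ = (2/k) ∑_a cos(aπ/k) σ̄_a⁽ⁱ⁾` and `X̄⁽ⁱ⁾ = (2/k) ∑_a sin(aπ/k) σ̄_a⁽ⁱ⁾` act on `ψ`
like Pauli matrices: `(Z̄⁽ⁱ⁾)² ψ = ψ`, `(X̄⁽ⁱ⁾)² ψ = ψ`, and
`(Z̄⁽ⁱ⁾X̄⁽ⁱ⁾ + X̄⁽ⁱ⁾Z̄⁽ⁱ⁾) ψ = 0`. -/
theorem max_violation_pauli_relations (N k : ℕ) (hN : 2 ≤ N) (hk : 3 ≤ k)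
    (H : Type*) [NormedAddCommGroup H] [InnerProductSpace ℂ H] [CompleteSpace H]
    (σ : Fin N → Fin k → (H →L[ℂ] H))
    (hsa : ∀ i a, IsSelfAdjoint (σ i a))
    (hsq : ∀ i a, σ i a * σ i a = 1)
    (hcomm : ∀ i j a b, i ≠ j → Commute (σ i a) (σ j b))
    (Bop : H →L[ℂ] H)
    (hBop : Bop = ∑ a : Fin k, ∑ b : Fin k,
        (((2 / (k : ℝ)) * Real.cos (π * ((a : ℝ) - (b : ℝ)) / k) : ℝ) : ℂ) •
          ∑ i : Fin N, ∑ j : Fin N, if i ≠ j then σ i a * σ j b else 0)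
    (Z X : Fin N → (H →L[ℂ] H))
    (hZ : ∀ i, Z i = (((2 / (k : ℝ)) : ℝ) : ℂ) •
        ∑ a : Fin k, ((Real.cos ((a : ℝ) * π / k) : ℝ) : ℂ) • σ i a)
    (hX : ∀ i, X i = (((2 / (k : ℝ)) : ℝ) : ℂ) •
        ∑ a : Fin k, ((Real.sin ((a : ℝ) * π / k) : ℝ) : ℂ) • σ i a)
    (ψ : H) (hψ : ‖ψ‖ = 1)
    (hmax : (inner ℂ ψ (Bop ψ) : ℂ) = -(((N : ℝ) * k : ℝ) : ℂ)) :
    ∀ i : Fin N,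
      (Z i * Z i) ψ = ψ ∧ (X i * X i) ψ = ψ ∧ (Z i * X i + X i * Z i) ψ = 0 :=
  max_violation_pauli_relations_general N k hk H σ hsa hsq hcomm Bop hBop Z X hZ hX ψ hψ hmax
end
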